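/- arXiv:math/0605408 — 10 statements merged into one kernel-verified Lean document; each statement's English description precedes it below -/
import Mathlib

section
/- (Mahler's lower bound) For every integer n ≥ 1 and every symmetric convex body C in ℝⁿ, one has vol(C) · vol(C°) ≥ 4ⁿ / (n!)². -/
open MeasureTheory Matrix Fintype Filter Topology

/-!
Choose `v₁, …, vₙ ∈ C` maximizing `|det (v₁, …, vₙ)|`; the maximum exists by compactness and is
positive because `0` is an interior point of `C`. By convexity and symmetry `C` contains the
cross-polytope spanned by the `±vᵢ`, of volume `|det| · 2ⁿ / n!`. By Cramer's rule and maximality,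
every `x ∈ C` has all coordinates in the basis `(vᵢ)` of absolute value at most `1`, so the polar
contains the cross-polytope spanned by the dual basis, of volume `|det|⁻¹ · 2ⁿ / n!`.
-/

theorem Convex.sum_smul_mem_of_sum_abs_le_one {E : Type*} [AddCommGroup E] [Module ℝ E]
    {C : Set E} (hC : Convex ℝ C) (hneg : -C ⊆ C) (h0 : 0 ∈ C) {ι : Type*} [Fintype ι]
    {v : ι → E} (hv : ∀ i, v i ∈ C) {t : ι → ℝ} (ht : ∑ i, |t i| ≤ 1) :
    ∑ i, t i • v i ∈ C := by
  classical
  -- `∑ tᵢ vᵢ` is the convex combination of `0` and the `±vᵢ` with weights `1 - ∑ |tᵢ|` and `|tᵢ|`.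
  let w : Option ι → ℝ := fun o => o.elim (1 - ∑ i, |t i|) fun i => |t i|
  let z : Option ι → E := fun o => o.elim 0 fun i => if 0 ≤ t i then v i else -v i
  have hz : ∀ o, z o ∈ C := by
    rintro (_ | i)
    · exact h0
    · by_cases hti : 0 ≤ t i
      · simpa [z, hti] using hv i
      · simpa [z, hti] using hneg (Set.neg_mem_neg.2 (hv i))
  have hwz : ∀ i, w (some i) • z (some i) = t i • v i := by
    intro i
    by_cases hti : 0 ≤ t i
    · simp [w, z, hti, abs_of_nonneg hti]
    · simp [w, z, hti, abs_of_neg (not_le.1 hti)]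
  have hmem := hC.sum_mem (t := Finset.univ) (w := w) (z := z)
    (by rintro (_ | i) - <;> simp [w, ht]) (by simp [w, Fintype.sum_option]) (fun o _ => hz o)
  rw [Fintype.sum_option] at hmem
  convert hmem using 1
  rw [show z none = 0 from rfl, smul_zero, zero_add]
  exact Finset.sum_congr rfl fun i _ => (hwz i).symm

theorem volume_sum_abs_lt_one (ι : Type*) [Fintype ι] :
    volume {x : ι → ℝ | ∑ i, |x i| < 1} = ENNReal.ofReal (2 ^ card ι / (card ι).factorial) := by
  simpa [Real.Gamma_nat_eq_factorial, one_add_one_eq_two] using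
    volume_sum_rpow_lt_one ι le_rfl

theorem Convex.zero_mem_interior_of_neg_subset {E : Type*} [AddCommGroup E] [Module ℝ E]
    [TopologicalSpace E] [IsTopologicalAddGroup E] [ContinuousConstSMul ℝ E] {C : Set E}
    (hC : Convex ℝ C) (hneg : -C ⊆ C) (hint : (interior C).Nonempty) : 0 ∈ interior C := by
  obtain ⟨z, hz⟩ := hint
  have hz' : -z ∈ interior C :=
    interior_mono hneg ((Homeomorph.neg E).preimage_interior C ▸ by simpa using hz)
  simpa using hC.interior hz hz' one_half_pos.le one_half_pos.le (add_halves 1)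

namespace Matrix

variable {ι : Type*} [Fintype ι] [DecidableEq ι]

theorem abs_vecMul_inv_le_one_of_isMaxOn_abs_det {K : Set (ι → ℝ)} {M : Matrix ι ι ℝ}
    (hMK : ∀ i, M i ∈ K) (hdet : M.det ≠ 0)
    (hmax : IsMaxOn (fun N : Matrix ι ι ℝ => |N.det|) (Set.univ.pi fun _ => K) M)
    {x : ι → ℝ} (hx : x ∈ K) (i : ι) : |(x ᵥ* M⁻¹) i| ≤ 1 := by
  -- `c` are the coordinates of `x` in the basis formed by the rows of `M`.
  set c := x ᵥ* M⁻¹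
  have hx_eq : x = ∑ k, c k • M k := by
    rw [← vecMul_eq_sum, vecMul_vecMul, nonsing_inv_mul _ (isUnit_iff_ne_zero.2 hdet),
      vecMul_one]
  have hupdate : (M.updateRow i x).det = c i * M.det := by
    rw [hx_eq, det_updateRow_sum, smul_eq_mul]
  have hle : |(M.updateRow i x).det| ≤ |M.det| := hmax <| Set.mem_univ_pi.2 fun k => by
    rcases eq_or_ne k i with rfl | hk
    · simpa using hx
    · simpa [hk] using hMK k
  rw [hupdate, abs_mul] at hle
  exact (mul_le_iff_le_one_left (abs_pos.2 hdet)).1 hle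

theorem exists_isMaxOn_abs_det {K : Set (ι → ℝ)} (hK : IsCompact K) (h0 : 0 ∈ interior K) :
    ∃ M : Matrix ι ι ℝ, (∀ i, M i ∈ K) ∧ M.det ≠ 0 ∧
      IsMaxOn (fun N : Matrix ι ι ℝ => |N.det|) (Set.univ.pi fun _ => K) M := by
  have hsingle : ∀ᶠ c in 𝓝[≠] (0 : ℝ), ∀ i, Pi.single i c ∈ K :=
    eventually_all.2 fun i => tendsto_nhdsWithin_of_tendsto_nhds
      ((continuous_single i).tendsto' 0 0 (by simp)) (mem_interior_iff_mem_nhds.1 h0)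
  obtain ⟨c, hcK, hc⟩ := (hsingle.and self_mem_nhdsWithin).exists
  have hdiag : diagonal (fun _ => c) ∈ Set.univ.pi fun _ : ι => K :=
    Set.mem_univ_pi.2 fun i => by
      convert hcK i using 1
      ext j
      simp [diagonal_apply, Pi.single_apply, eq_comm]
  obtain ⟨M, hM, hmax⟩ := (isCompact_univ_pi fun _ => hK).exists_isMaxOn ⟨_, hdiag⟩
    (f := fun N : Matrix ι ι ℝ => |N.det|) (continuous_id.matrix_det.abs.continuousOn)
  refine ⟨M, Set.mem_univ_pi.1 hM, fun hdet => ?_, hmax⟩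
  have hle : |(diagonal fun _ : ι => c).det| ≤ |det M| := hmax hdiag
  rw [hdet, abs_zero, abs_nonpos_iff, det_diagonal, Finset.prod_const] at hle
  exact pow_ne_zero _ hc hle

theorem image_toLin'_transpose_subset {K : Set (ι → ℝ)} (hconv : Convex ℝ K) (hneg : -K ⊆ K)
    (h0 : 0 ∈ K) {M : Matrix ι ι ℝ} (hMK : ∀ i, M i ∈ K) :
    toLin' Mᵀ '' {t | ∑ i, |t i| < 1} ⊆ K := by
  rintro _ ⟨t, ht, rfl⟩
  rw [toLin'_apply, mulVec_transpose, vecMul_eq_sum]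
  exact hconv.sum_smul_mem_of_sum_abs_le_one hneg h0 hMK ht.le

theorem image_toLin'_inv_subset_polar {K : Set (ι → ℝ)} {M : Matrix ι ι ℝ}
    (hMK : ∀ i, M i ∈ K) (hdet : M.det ≠ 0)
    (hmax : IsMaxOn (fun N : Matrix ι ι ℝ => |N.det|) (Set.univ.pi fun _ => K) M) :
    toLin' M⁻¹ '' {t | ∑ i, |t i| < 1} ⊆ {y | ∀ x ∈ K, |x ⬝ᵥ y| ≤ 1} := by
  rintro _ ⟨t, ht, rfl⟩ x hx
  rw [toLin'_apply, dotProduct_mulVec]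
  calc |(x ᵥ* M⁻¹) ⬝ᵥ t| ≤ ∑ i, |(x ᵥ* M⁻¹) i| * |t i| := by
        simpa only [dotProduct, abs_mul] using
          Finset.abs_sum_le_sum_abs (fun i => (x ᵥ* M⁻¹) i * t i) Finset.univ
    _ ≤ ∑ i, |t i| := Finset.sum_le_sum fun i _ => mul_le_of_le_one_left (abs_nonneg _)
        (abs_vecMul_inv_le_one_of_isMaxOn_abs_det hMK hdet hmax hx i)
    _ ≤ 1 := ht.le

end Matrix

theorem mahler_lower_bound_pi {ι : Type*} [Fintype ι] [DecidableEq ι] {K : Set (ι → ℝ)}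
    (hconv : Convex ℝ K) (hcomp : IsCompact K) (hint : (interior K).Nonempty) (hneg : -K ⊆ K) :
    ENNReal.ofReal (4 ^ card ι / (card ι).factorial ^ 2) ≤
      volume K * volume {y | ∀ x ∈ K, |x ⬝ᵥ y| ≤ 1} := by
  have h0 := hconv.zero_mem_interior_of_neg_subset hneg hint
  obtain ⟨M, hMK, hdet, hmax⟩ := Matrix.exists_isMaxOn_abs_det hcomp h0
  have hK := measure_mono (μ := volume)
    (Matrix.image_toLin'_transpose_subset hconv hneg (interior_subset h0) hMK)
  have hpolar := measure_mono (μ := volume) (Matrix.image_toLin'_inv_subset_polar hMK hdet hmax)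
  rw [Measure.addHaar_image_linearMap, LinearMap.det_toLin', det_transpose,
    volume_sum_abs_lt_one] at hK
  rw [Measure.addHaar_image_linearMap, LinearMap.det_toLin', det_nonsing_inv,
    Ring.inverse_eq_inv', abs_inv, volume_sum_abs_lt_one] at hpolar
  refine le_of_eq_of_le ?_ (mul_le_mul' hK hpolar)
  rw [mul_mul_mul_comm, ← ENNReal.ofReal_mul (abs_nonneg _),
    mul_inv_cancel₀ (abs_ne_zero.2 hdet), ENNReal.ofReal_one, one_mul,
    ← ENNReal.ofReal_mul (by positivity), ← sq, div_pow, ← pow_mul, mul_comm, pow_mul]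
  norm_num

namespace EuclideanSpace

variable {ι : Type*} [Fintype ι]

theorem volume_preimage_toLp (s : Set (EuclideanSpace ℝ ι)) :
    volume (WithLp.toLp 2 ⁻¹' s) = volume s :=
  ((volume_preserving_symm_measurableEquiv_toLp ι).symm _).measure_preimage_equiv s

theorem preimage_toLp_polar (C : Set (EuclideanSpace ℝ ι)) :
    WithLp.toLp 2 ⁻¹' {y | ∀ x ∈ C, |inner ℝ x y| ≤ 1} =
      {y | ∀ x ∈ WithLp.toLp 2 ⁻¹' C, |x ⬝ᵥ y| ≤ 1} := by
  ext y
  simp only [Set.mem_preimage, Set.mem_ofPred_eq]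
  rw [← (WithLp.equiv 2 (ι → ℝ)).symm.forall_congr_right]
  simp [inner_toLp_toLp, dotProduct_comm]

end EuclideanSpace

theorem mahler_lower_bound_general (n : ℕ)
    (C : Set (EuclideanSpace ℝ (Fin n)))
    (hC_conv : Convex ℝ C) (hC_comp : IsCompact C)
    (hC_int : (interior C).Nonempty) (hC_symm : C = -C) :
    ENNReal.ofReal ((4 : ℝ) ^ n / (n.factorial : ℝ) ^ 2) ≤
      volume C *
        volume {y : EuclideanSpace ℝ (Fin n) | ∀ x ∈ C, |(inner ℝ x y : ℝ)| ≤ 1} := by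
  let e : (Fin n → ℝ) ≃ₜ EuclideanSpace ℝ (Fin n) := (PiLp.homeomorph 2 _).symm
  have key := mahler_lower_bound_pi (K := WithLp.toLp 2 ⁻¹' C)
    (hC_conv.linear_preimage (WithLp.linearEquiv 2 ℝ (Fin n → ℝ)).symm.toLinearMap)
    (e.isCompact_preimage.2 hC_comp)
    (e.preimage_interior C ▸ hC_int.preimage e.surjective)
    (fun x hx => hC_symm.superset (by simpa using hx))
  rwa [← EuclideanSpace.preimage_toLp_polar, EuclideanSpace.volume_preimage_toLp,
    EuclideanSpace.volume_preimage_toLp, card_fin] at key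

/-- **Mahler's lower bound.** For every symmetric convex body `C` in `ℝⁿ`,
`vol C * vol C° ≥ 4ⁿ / (n!)²`. -/
theorem mahler_lower_bound (n : ℕ) (hn : 1 ≤ n)
    (C : Set (EuclideanSpace ℝ (Fin n)))
    (hC_conv : Convex ℝ C) (hC_comp : IsCompact C)
    (hC_int : (interior C).Nonempty) (hC_symm : C = -C) :
    ENNReal.ofReal ((4 : ℝ) ^ n / (n.factorial : ℝ) ^ 2) ≤
      volume C *
        volume {y : EuclideanSpace ℝ (Fin n) | ∀ x ∈ C, |(inner ℝ x y : ℝ)| ≤ 1} :=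
  mahler_lower_bound_general n C hC_conv hC_comp hC_int hC_symm
end

section
/- (John ellipsoid) For every integer n ≥ 1 and every symmetric convex body C in ℝⁿ, there exists a unique ellipsoid J(C) contained in C whose Lebesgue volume is maximal among all ellipsoids contained in C; that is, there exists an ellipsoid D ⊆ C such that vol(D') ≤ vol(D) for every ellipsoid D' ⊆ C, and any two such maximal-volume ellipsoids coincide as sets. -/
/-!
Linear maps `L` with `L(B) ⊆ C`, `B` the unit ball, form a compact set of operators on which
`|det L|`, proportional to the volume of `L(B)`, attains its maximum; the maximum is positive since
a symmetric convex body contains a ball around `0`.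

For uniqueness write every ellipsoid as `P(B)` with `P` positive definite (polar decomposition).
If `P(B)` and `Q(B)` both have maximal volume then `det P = det Q`, and `((P + Q)/2)(B) ⊆ C` by
convexity. With `S = √P` and `R = S⁻¹ Q S⁻¹` we get `det ((P + Q)/2) = det P · ∏ (1 + λᵢ)/2` over
the eigenvalues `λᵢ` of `R`, whose product is `1`; by AM–GM this exceeds `det P` unless all
`λᵢ = 1`, i.e. `P = Q`.
-/

open MeasureTheory

/-- An ellipsoid in `ℝⁿ` is the image of the closed Euclidean unit ball under an
invertible linear map. -/
def IsEllipsoid (n : ℕ) (D : Set (EuclideanSpace ℝ (Fin n))) : Prop :=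
  ∃ L : EuclideanSpace ℝ (Fin n) ≃ₗ[ℝ] EuclideanSpace ℝ (Fin n),
    D = L '' Metric.closedBall 0 1

open Matrix Metric Set
open scoped MatrixOrder

lemma Real.sqrt_le_half_one_add {x : ℝ} (hx : 0 ≤ x) : √x ≤ 2⁻¹ * (1 + x) := by
  nlinarith [Real.sq_sqrt hx, sq_nonneg (√x - 1)]

lemma Real.sqrt_lt_half_one_add {x : ℝ} (hx : 0 ≤ x) (h1 : x ≠ 1) : √x < 2⁻¹ * (1 + x) := by
  have hsq := Real.sq_sqrt hx
  have hne : √x ≠ 1 := fun h => h1 (by rw [← hsq, h, one_pow])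
  nlinarith [sq_pos_of_ne_zero (sub_ne_zero.2 hne)]

lemma one_lt_prod_half_one_add {ι : Type*} [Fintype ι] {d : ι → ℝ} (hpos : ∀ i, 0 < d i)
    (hprod : ∏ i, d i = 1) (hne : d ≠ 1) : 1 < ∏ i, 2⁻¹ * (1 + d i) := by
  obtain ⟨j, hj⟩ := Function.ne_iff.mp hne
  calc 1 = ∏ i, √(d i) := by
        rw [← Real.sqrt_prod _ fun i _ => (hpos i).le, hprod, Real.sqrt_one]
    _ < ∏ i, 2⁻¹ * (1 + d i) :=
        Finset.prod_lt_prod (fun i _ => Real.sqrt_pos.2 (hpos i))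
          (fun i _ => Real.sqrt_le_half_one_add (hpos i).le)
          ⟨j, Finset.mem_univ j, Real.sqrt_lt_half_one_add (hpos j).le hj⟩

namespace Matrix

variable {ι : Type*} [Fintype ι] [DecidableEq ι]

lemma IsHermitian.det_cfc {A : Matrix ι ι ℝ} (hA : A.IsHermitian) (f : ℝ → ℝ) :
    (cfc f A).det = ∏ i, f (hA.eigenvalues i) := by
  rw [hA.cfc_eq]
  simp [IsHermitian.cfc, -Unitary.conjStarAlgAut_apply]

lemma IsHermitian.cfc_half_one_add {A : Matrix ι ι ℝ} (hA : A.IsHermitian) :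
    cfc (fun x : ℝ => 2⁻¹ * (1 + x)) A = (2:ℝ)⁻¹ • (1 + A) := by
  have hA' : IsSelfAdjoint A := hA
  rw [cfc_const_mul _ _ A, cfc_const_add _ _ A, cfc_id' ℝ A, Algebra.algebraMap_eq_smul_one,
    one_smul]

lemma PosDef.one_lt_det_half_one_add {R : Matrix ι ι ℝ} (hR : R.PosDef) (hdet : R.det = 1)
    (hne : R ≠ 1) : 1 < ((2:ℝ)⁻¹ • (1 + R)).det := by
  rw [← hR.isHermitian.cfc_half_one_add, hR.isHermitian.det_cfc]
  refine one_lt_prod_half_one_add hR.eigenvalues_pos ?_ fun h => hne ?_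
  · simpa [hR.isHermitian.det_eq_prod_eigenvalues] using hdet
  · rw [hR.isHermitian.spectral_theorem, h]
    simp

/-- Equality case of Minkowski's determinant inequality. -/
lemma PosDef.det_lt_det_midpoint {A B : Matrix ι ι ℝ} (hA : A.PosDef) (hB : B.PosDef)
    (hdet : A.det = B.det) (hne : A ≠ B) : A.det < ((2:ℝ)⁻¹ • (A + B)).det := by
  set S := CFC.sqrt A
  have hS : S.PosDef := (IsStrictlyPositive.sqrt A hA.isStrictlyPositive).posDef
  have hSS : S * S = A := CFC.sqrt_mul_sqrt_self A hA.posSemidef.nonneg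
  have hSdet : IsUnit S.det := hS.det_pos.ne'.isUnit
  set R := S⁻¹ * B * S⁻¹
  have hR : R.PosDef := by
    simpa only [hS.inv.isHermitian.eq] using
      hB.conjTranspose_mul_mul_same (mulVec_injective_iff_isUnit.2 hS.inv.isUnit)
  have hBR : B = S * R * S := by
    rw [← mul_assoc, mul_nonsing_inv_cancel_left _ _ hSdet, nonsing_inv_mul_cancel_right _ _ hSdet]
  have hdetR : R.det = 1 := by
    have h := congrArg det hBR
    rw [det_mul, det_mul, ← hdet, ← hSS, det_mul] at h
    have : S.det * S.det * (R.det - 1) = 0 := by linear_combination -h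
    simpa [hS.det_pos.ne', sub_eq_zero] using this
  have hR1 : R ≠ 1 := fun h => hne (by rw [hBR, h, mul_one, hSS])
  have hmid : (2:ℝ)⁻¹ • (A + B) = S * ((2:ℝ)⁻¹ • (1 + R)) * S := by
    rw [hBR, ← hSS, Matrix.mul_smul, Matrix.smul_mul, mul_add, add_mul, mul_one]
  have hSpos := hS.det_pos
  rw [hmid, det_mul, det_mul, ← hSS, det_mul]
  nlinarith [hR.one_lt_det_half_one_add hdetR hR1, mul_pos hSpos hSpos]

lemma norm_toEuclideanLin_of_mem_unitaryGroup {U : Matrix ι ι ℝ}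
    (hU : U ∈ unitaryGroup ι ℝ) (x : EuclideanSpace ℝ ι) : ‖toEuclideanLin U x‖ = ‖x‖ := by
  simpa [← coe_toEuclideanCLM_eq_toEuclideanLin] using
    ContinuousLinearMap.norm_map_of_mem_unitary (Unitary.map_mem toEuclideanCLM hU) x

lemma toEuclideanLin_image_closedBall_of_mem_unitaryGroup {U : Matrix ι ι ℝ}
    (hU : U ∈ unitaryGroup ι ℝ) (r : ℝ) :
    toEuclideanLin U '' closedBall 0 r = closedBall 0 r := by
  refine Subset.antisymm ?_ fun y hy => ⟨toEuclideanLin (star U) y, ?_, ?_⟩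
  · rintro _ ⟨x, hx, rfl⟩
    simpa [norm_toEuclideanLin_of_mem_unitaryGroup hU] using hx
  · simpa [norm_toEuclideanLin_of_mem_unitaryGroup (Unitary.star_mem hU)] using hy
  · rw [← LinearMap.comp_apply, ← toLpLin_mul_same, mem_unitaryGroup_iff.1 hU]
    simp

/-- Polar decomposition `M = P U`, with `P = √(M Mᴴ)` and `U = P⁻¹ M` orthogonal. -/
lemma exists_posDef_toEuclideanLin_image_closedBall_eq {M : Matrix ι ι ℝ} (hM : IsUnit M) :
    ∃ P : Matrix ι ι ℝ, P.PosDef ∧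
      toEuclideanLin P '' closedBall 0 1 = toEuclideanLin M '' closedBall 0 1 := by
  have hMM : (M * Mᴴ).PosDef := .mul_conjTranspose_self M (vecMul_injective_iff_isUnit.2 hM)
  set P := CFC.sqrt (M * Mᴴ)
  have hP : P.PosDef := (IsStrictlyPositive.sqrt _ hMM.isStrictlyPositive).posDef
  have hPP : P * P = M * Mᴴ := CFC.sqrt_mul_sqrt_self _ hMM.posSemidef.nonneg
  have hPdet : IsUnit P.det := hP.det_pos.ne'.isUnit
  have hU : P⁻¹ * M ∈ unitaryGroup ι ℝ := by
    rw [mem_unitaryGroup_iff, star_mul, star_eq_conjTranspose, star_eq_conjTranspose,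
      conjTranspose_nonsing_inv, hP.isHermitian.eq, mul_assoc, ← mul_assoc M, ← hPP,
      mul_nonsing_inv_cancel_right _ _ hPdet, nonsing_inv_mul _ hPdet]
  refine ⟨P, hP, ?_⟩
  calc toEuclideanLin P '' closedBall 0 1
      = toEuclideanLin P '' (toEuclideanLin (P⁻¹ * M) '' closedBall 0 1) := by
        rw [toEuclideanLin_image_closedBall_of_mem_unitaryGroup hU]
    _ = toEuclideanLin M '' closedBall 0 1 := by
        rw [← image_comp, ← LinearMap.coe_comp, ← toLpLin_mul_same,
          mul_nonsing_inv_cancel_left _ _ hPdet]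

end Matrix

lemma Convex.zero_mem_interior_of_neg_eq {E : Type*} [AddCommGroup E] [Module ℝ E]
    [TopologicalSpace E] [IsTopologicalAddGroup E] [ContinuousConstSMul ℝ E] {C : Set E}
    (hC : Convex ℝ C) (hsymm : -C = C) (hint : (interior C).Nonempty) : (0 : E) ∈ interior C := by
  obtain ⟨x, hx⟩ := hint
  have hneg : -interior C ⊆ interior C :=
    interior_maximal (Set.neg_subset.2 (by rw [hsymm]; exact interior_subset)) isOpen_interior.neg
  simpa using hC.interior hx (hneg (Set.neg_mem_neg.2 hx)) (by norm_num : (0:ℝ) ≤ 2⁻¹)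
    (by norm_num : (0:ℝ) ≤ 2⁻¹) (by norm_num)

lemma Convex.image_smul_add_smul_subset {E F : Type*} [AddCommGroup E] [Module ℝ E]
    [AddCommGroup F] [Module ℝ F] {C : Set F} (hC : Convex ℝ C) {f g : E →ₗ[ℝ] F} {s : Set E}
    (hf : f '' s ⊆ C) (hg : g '' s ⊆ C) {a b : ℝ} (ha : 0 ≤ a) (hb : 0 ≤ b) (hab : a + b = 1) :
    (a • f + b • g) '' s ⊆ C := by
  rintro _ ⟨x, hx, rfl⟩
  exact hC (hf ⟨x, hx, rfl⟩) (hg ⟨x, hx, rfl⟩) ha hb hab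

section FiniteDimensional

variable {E F : Type*} [NormedAddCommGroup E] [NormedSpace ℝ E] [FiniteDimensional ℝ E]
  [NormedAddCommGroup F] [NormedSpace ℝ F] [FiniteDimensional ℝ F]

lemma isCompact_setOf_mapsTo_closedBall {C : Set F} (hC : IsCompact C) :
    IsCompact {L : E →L[ℝ] F | MapsTo L (closedBall 0 1) C} := by
  obtain ⟨R, hR⟩ := hC.isBounded.subset_closedBall 0
  refine Metric.isCompact_of_isClosed_isBounded
    (hC.isClosed.setOfPred_mapsTo fun x _ => continuous_eval_const x)
    ((isBounded_closedBall (x := 0) (r := max R 0)).subset fun L hL => ?_)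
  rw [mem_closedBall_zero_iff]
  refine L.opNorm_le_of_unit_norm (le_max_right _ _) fun x hx => ?_
  have := norm_le_of_mem_closedBall (hR (hL (mem_closedBall_zero_iff.2 hx.le)))
  rw [norm_zero, zero_add] at this
  exact this.trans (le_max_left _ _)

lemma exists_linearEquiv_mapsTo_closedBall_forall_abs_det_le {C : Set E} (hC : IsCompact C)
    (h0 : 0 ∈ interior C) :
    ∃ L : E ≃ₗ[ℝ] E, MapsTo L (closedBall 0 1) C ∧
      ∀ L' : E →ₗ[ℝ] E, MapsTo L' (closedBall 0 1) C →
        |LinearMap.det L'| ≤ |LinearMap.det (L : E →ₗ[ℝ] E)| := by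
  obtain ⟨r, hr, hrC⟩ := nhds_basis_closedBall.mem_iff.1 (mem_interior_iff_mem_nhds.1 h0)
  have hball : MapsTo (r • ContinuousLinearMap.id ℝ E) (closedBall 0 1) C := fun x hx => hrC <| by
    simpa [norm_smul, abs_of_pos hr] using
      mul_le_of_le_one_right hr.le (mem_closedBall_zero_iff.1 hx)
  obtain ⟨L, hL, hLmax⟩ := (isCompact_setOf_mapsTo_closedBall hC).exists_isMaxOn ⟨_, hball⟩
    ContinuousLinearMap.continuous_det.abs.continuousOn
  have hpos : 0 < |(r • ContinuousLinearMap.id ℝ E).det| := by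
    simp [ContinuousLinearMap.det, hr.ne']
  have hdet : IsUnit (LinearMap.det (L : E →ₗ[ℝ] E)) := isUnit_iff_ne_zero.2 fun h =>
    (hpos.trans_le (hLmax hball)).ne' (by simp [ContinuousLinearMap.det, h])
  refine ⟨LinearMap.equivOfIsUnitDet hdet, fun x hx => ?_, fun L' hL' => ?_⟩
  · rw [LinearMap.equivOfIsUnitDet_apply]
    exact hL hx
  · simpa using hLmax (a := LinearMap.toContinuousLinearMap L') hL'

lemma Measure.addHaar_image_le_addHaar_image [MeasurableSpace E] [BorelSpace E]
    (μ : Measure E) [μ.IsAddHaarMeasure] {f g : E →ₗ[ℝ] E}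
    (h : |LinearMap.det f| ≤ |LinearMap.det g|) (s : Set E) : μ (f '' s) ≤ μ (g '' s) := by
  rw [Measure.addHaar_image_linearMap, Measure.addHaar_image_linearMap]
  gcongr

end FiniteDimensional

section Ellipsoid

variable {n : ℕ}

lemma isEllipsoid_toEuclideanLin_image_closedBall {P : Matrix (Fin n) (Fin n) ℝ} (hP : IsUnit P) :
    IsEllipsoid n (toEuclideanLin P '' closedBall 0 1) := by
  have hdet : IsUnit (LinearMap.det (toEuclideanLin P)) := by
    simpa using (isUnit_iff_isUnit_det P).1 hP
  refine ⟨LinearMap.equivOfIsUnitDet hdet, ?_⟩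
  simp only [LinearMap.equivOfIsUnitDet_apply]

lemma IsEllipsoid.exists_posDef {D : Set (EuclideanSpace ℝ (Fin n))} (hD : IsEllipsoid n D) :
    ∃ P : Matrix (Fin n) (Fin n) ℝ, P.PosDef ∧ D = toEuclideanLin P '' closedBall 0 1 := by
  obtain ⟨L, rfl⟩ := hD
  set M := toEuclideanLin.symm (L : EuclideanSpace ℝ (Fin n) →ₗ[ℝ] EuclideanSpace ℝ (Fin n))
  have hM : IsUnit M := by
    rw [isUnit_iff_isUnit_det, ← LinearMap.det_toLpLin 2, toEuclideanLin.apply_symm_apply]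
    exact L.isUnit_det'
  obtain ⟨P, hP, hPM⟩ := exists_posDef_toEuclideanLin_image_closedBall_eq hM
  refine ⟨P, hP, ?_⟩
  rw [hPM, LinearEquiv.apply_symm_apply, LinearEquiv.coe_coe]

lemma volume_toEuclideanLin_image_closedBall_le_iff {P Q : Matrix (Fin n) (Fin n) ℝ}
    (hP : P.PosDef) (hQ : Q.PosDef) :
    volume (toEuclideanLin P '' closedBall 0 1) ≤ volume (toEuclideanLin Q '' closedBall 0 1) ↔
      P.det ≤ Q.det := by
  simp only [Measure.addHaar_image_linearMap, LinearMap.det_toLpLin, abs_of_pos hP.det_pos,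
    abs_of_pos hQ.det_pos]
  rw [ENNReal.mul_le_mul_iff_left (measure_closedBall_pos volume 0 one_pos).ne'
    measure_closedBall_lt_top.ne, ENNReal.ofReal_le_ofReal_iff hQ.det_pos.le]

theorem IsEllipsoid.eq_of_forall_volume_le {C : Set (EuclideanSpace ℝ (Fin n))}
    (hC : Convex ℝ C) {D₁ D₂ : Set (EuclideanSpace ℝ (Fin n))}
    (h₁ : IsEllipsoid n D₁) (h₂ : IsEllipsoid n D₂) (h₁C : D₁ ⊆ C) (h₂C : D₂ ⊆ C)
    (h₁max : ∀ D, IsEllipsoid n D → D ⊆ C → volume D ≤ volume D₁)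
    (h₂max : ∀ D, IsEllipsoid n D → D ⊆ C → volume D ≤ volume D₂) : D₁ = D₂ := by
  obtain ⟨P₁, hP₁, rfl⟩ := h₁.exists_posDef
  obtain ⟨P₂, hP₂, rfl⟩ := h₂.exists_posDef
  have hdet : P₁.det = P₂.det := le_antisymm
    ((volume_toEuclideanLin_image_closedBall_le_iff hP₁ hP₂).1 (h₂max _ h₁ h₁C))
    ((volume_toEuclideanLin_image_closedBall_le_iff hP₂ hP₁).1 (h₁max _ h₂ h₂C))
  by_contra hne
  have hP : P₁ ≠ P₂ := by rintro rfl; exact hne rfl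
  set Q := (2:ℝ)⁻¹ • (P₁ + P₂)
  have hQ : Q.PosDef := (hP₁.add hP₂).smul (by norm_num)
  have hQC : toEuclideanLin Q '' closedBall 0 1 ⊆ C := by
    simpa [Q, smul_add] using hC.image_smul_add_smul_subset h₁C h₂C
      (by norm_num : (0:ℝ) ≤ 2⁻¹) (by norm_num : (0:ℝ) ≤ 2⁻¹) (by norm_num)
  have hle := (volume_toEuclideanLin_image_closedBall_le_iff hQ hP₁).1
    (h₁max _ (isEllipsoid_toEuclideanLin_image_closedBall hQ.isUnit) hQC)
  exact (hP₁.det_lt_det_midpoint hP₂ hdet hP).not_ge hle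

end Ellipsoid

theorem john_ellipsoid_general (n : ℕ)
    (C : Set (EuclideanSpace ℝ (Fin n)))
    (hC_conv : Convex ℝ C) (hC_comp : IsCompact C)
    (hC_int : (interior C).Nonempty) (hC_symm : C = -C) :
    ∃! D : Set (EuclideanSpace ℝ (Fin n)),
      IsEllipsoid n D ∧ D ⊆ C ∧
        ∀ D' : Set (EuclideanSpace ℝ (Fin n)),
          IsEllipsoid n D' → D' ⊆ C → volume D' ≤ volume D := by
  obtain ⟨L, hLC, hLmax⟩ := exists_linearEquiv_mapsTo_closedBall_forall_abs_det_le hC_comp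
    (hC_conv.zero_mem_interior_of_neg_eq hC_symm.symm hC_int)
  have hmax : ∀ D', IsEllipsoid n D' → D' ⊆ C → volume D' ≤ volume (L '' closedBall 0 1) := by
    rintro _ ⟨L', rfl⟩ hL'C
    exact Measure.addHaar_image_le_addHaar_image volume
      (hLmax L' (mapsTo_iff_image_subset.2 hL'C)) _
  refine ⟨L '' closedBall 0 1, ⟨⟨L, rfl⟩, hLC.image_subset, hmax⟩, ?_⟩
  rintro D ⟨hD, hDC, hDmax⟩
  exact hD.eq_of_forall_volume_le hC_conv ⟨L, rfl⟩ hDC hLC.image_subset hDmax hmax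

/-- **John ellipsoid.** Every symmetric convex body `C` in `ℝⁿ` contains a unique ellipsoid
of maximal volume among all ellipsoids contained in `C`. -/
theorem john_ellipsoid (n : ℕ) (hn : 1 ≤ n)
    (C : Set (EuclideanSpace ℝ (Fin n)))
    (hC_conv : Convex ℝ C) (hC_comp : IsCompact C)
    (hC_int : (interior C).Nonempty) (hC_symm : C = -C) :
    ∃! D : Set (EuclideanSpace ℝ (Fin n)),
      IsEllipsoid n D ∧ D ⊆ C ∧
        ∀ D' : Set (EuclideanSpace ℝ (Fin n)),
          IsEllipsoid n D' → D' ⊆ C → volume D' ≤ volume D :=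
  john_ellipsoid_general n C hC_conv hC_comp hC_int hC_symm
end

section
/- (John's √n containment) Let n ≥ 1 and let C be a symmetric convex body in ℝⁿ. If D is an ellipsoid contained in C of maximal Lebesgue volume among all ellipsoids contained in C, then C ⊆ √n · D, where √n · D denotes the dilate {√n · x : x ∈ D}. -/
open MeasureTheory Pointwise

/-!
Write `D = L(B)` for the unit ball `B`. If some `x ∈ C` had `R := ‖L⁻¹ x‖ > √n`, then `L⁻¹ C` would
contain `B` and `±R u` for a unit vector `u`, hence the convex hull of these. That hull contains
the ellipsoid with semi-axis `a = R / √n` along `u` and semi-axes `b` with `b² (R² - 1) = R² - a²`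
orthogonally to `u`, and Bernoulli's inequality gives `a bⁿ⁻¹ > 1`, so its image under `L` would
be an ellipsoid in `C` of larger volume than `D`.
-/

open Module Metric
open scoped RealInnerProductSpace ENNReal

theorem LinearMap.det_eq_pow_mul_pow_of_isCompl {K V : Type*} [Field K] [AddCommGroup V]
    [Module K V] [FiniteDimensional K V] {p q : Submodule K V} (h : IsCompl p q)
    {f : V →ₗ[K] V} {a b : K} (hp : ∀ x ∈ p, f x = a • x) (hq : ∀ x ∈ q, f x = b • x) :
    LinearMap.det f = a ^ finrank K p * b ^ finrank K q := by
  set e := p.prodEquivOfIsCompl q h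
  have hconj : (e.symm : V →ₗ[K] p × q) ∘ₗ f ∘ₗ e =
      (a • LinearMap.id : p →ₗ[K] p).prodMap (b • LinearMap.id) := by
    ext x
    all_goals simp [e, hp, hq]
  rw [← LinearMap.det_conj f e.symm, LinearEquiv.symm_symm, hconj, LinearMap.det_prodMap,
    LinearMap.det_smul, LinearMap.det_smul, LinearMap.det_id, LinearMap.det_id, mul_one, mul_one]

theorem Convex.mem_of_norm_sub_smul_le {E : Type*} [NormedAddCommGroup E] [NormedSpace ℝ E]
    {C : Set E} (hC : Convex ℝ C) (hB : closedBall (0 : E) 1 ⊆ C) {x p : E} (hx : x ∈ C)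
    {l : ℝ} (hl0 : 0 ≤ l) (hl1 : l ≤ 1) (h : ‖p - l • x‖ ≤ 1 - l) : p ∈ C := by
  have hp : p - l • x ∈ (1 - l) • closedBall (0 : E) 1 := by
    rw [smul_unitClosedBall, Real.norm_of_nonneg (by linarith)]
    simpa using h
  obtain ⟨v, hv, hv'⟩ := Set.mem_smul_set.1 hp
  have := hC hx (hB hv) hl0 (by linarith) (add_sub_cancel l 1)
  rwa [hv', add_sub_cancel] at this

theorem MeasureTheory.Measure.addHaar_image_lt_addHaar_image_image {F : Type*}
    [NormedAddCommGroup F] [NormedSpace ℝ F] [MeasurableSpace F] [BorelSpace F]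
    [FiniteDimensional ℝ F] (μ : Measure F) [μ.IsAddHaarMeasure] (L : F ≃ₗ[ℝ] F)
    {M : F →ₗ[ℝ] F} (hM : 1 < |LinearMap.det M|) {s : Set F} (h0 : μ s ≠ 0) (htop : μ s ≠ ∞) :
    μ (L '' s) < μ (L '' (M '' s)) := by
  rw [← LinearEquiv.coe_coe, addHaar_image_linearMap, addHaar_image_linearMap,
    addHaar_image_linearMap]
  refine ENNReal.mul_lt_mul_right (ENNReal.ofReal_pos.2 (abs_pos.2 L.isUnit_det'.ne_zero)).ne'
    ENNReal.ofReal_ne_top ?_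
  simpa using ENNReal.mul_lt_mul_left h0 htop (ENNReal.one_lt_ofReal.2 hM)

theorem one_lt_mul_pow_of_lt {m : ℕ} {s : ℝ} (hs : m + 1 < s) :
    1 < s / (m + 1) * ((s - s / (m + 1)) / (s - 1)) ^ m := by
  have hs0 : 0 < s := by linarith [m.cast_nonneg (α := ℝ)]
  have hs1 : 0 < s - 1 := by linarith [m.cast_nonneg (α := ℝ)]
  set h := -((s - (m + 1)) / ((m + 1) * (s - 1)))
  have hbase : (s - s / (m + 1)) / (s - 1) = 1 + h := by
    simp only [h]; field_simp; ring
  have hh : -2 ≤ h := by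
    have : 0 ≤ (s - s / (m + 1)) / (s - 1) :=
      div_nonneg (sub_nonneg.2 (div_le_self hs0.le (by linarith [m.cast_nonneg (α := ℝ)])))
        hs1.le
    linarith
  calc 1 < 1 + (s - (m + 1)) ^ 2 / ((m + 1) ^ 2 * (s - 1)) :=
        lt_add_of_pos_right _ (div_pos (pow_pos (sub_pos.2 hs) 2) (by positivity))
    _ = s / (m + 1) * (1 + m * h) := by simp only [h]; field_simp; ring
    _ ≤ s / (m + 1) * ((s - s / (m + 1)) / (s - 1)) ^ m := by
        rw [hbase]
        exact mul_le_mul_of_nonneg_left (one_add_mul_le_pow hh m) (by positivity)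

-- `a² = R² / (m + 1)` maximises `a² (b²)ᵐ` subject to `b² (R² - 1) = R² - a²`.
theorem exists_semiaxes (m : ℕ) {R : ℝ} (hR0 : 0 ≤ R) (hR : m + 1 < R ^ 2) :
    ∃ a b : ℝ, 1 ≤ a ∧ a ≤ R ∧ b ^ 2 * (R ^ 2 - 1) = R ^ 2 - a ^ 2 ∧ 1 < |a * b ^ m| := by
  have hm : (0 : ℝ) < m + 1 := by positivity
  have hR1 : 0 < R ^ 2 - 1 := by linarith
  have ha : √(R ^ 2 / (m + 1)) ^ 2 = R ^ 2 / (m + 1) := Real.sq_sqrt (by positivity)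
  have haR : R ^ 2 / (m + 1) ≤ R ^ 2 := div_le_self (sq_nonneg R) (by linarith)
  refine ⟨√(R ^ 2 / (m + 1)), √((R ^ 2 - R ^ 2 / (m + 1)) / (R ^ 2 - 1)), ?_, ?_, ?_, ?_⟩
  · exact Real.one_le_sqrt.2 ((one_le_div hm).2 hR.le)
  · exact (Real.sqrt_le_left hR0).2 haR
  · rw [Real.sq_sqrt (div_nonneg (by linarith) hR1.le), div_mul_cancel₀ _ hR1.ne', ha]
  · rw [← one_lt_sq_iff_one_lt_abs, mul_pow, ← pow_mul, mul_comm m 2, pow_mul, ha,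
      Real.sq_sqrt (div_nonneg (by linarith) hR1.le)]
    exact one_lt_mul_pow_of_lt hR

-- In the plane, `(a t, b √q)` lies in the disc of radius `1 - l` about `(l R, 0)`, hence in the
-- convex hull of the unit disc and `(R, 0)`.
theorem exists_sq_add_sq_mul_le {R a b t q : ℝ} (hR : 1 < R) (ha : 1 ≤ a) (haR : a ≤ R)
    (hb : b ^ 2 * (R ^ 2 - 1) = R ^ 2 - a ^ 2) (ht : 0 ≤ t) (hq : 0 ≤ q) (htq : t ^ 2 + q ≤ 1) :
    ∃ l : ℝ, 0 ≤ l ∧ l ≤ 1 ∧ (a * t - l * R) ^ 2 + b ^ 2 * q ≤ (1 - l) ^ 2 := by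
  have hc : 0 < R ^ 2 - 1 := by nlinarith
  have ht1 : t ≤ 1 := by nlinarith
  suffices ∃ l : ℝ, 0 ≤ l ∧ l ≤ 1 ∧ (a * t - l * R) ^ 2 + b ^ 2 * (1 - t ^ 2) ≤ (1 - l) ^ 2 by
    obtain ⟨l, hl0, hl1, hl⟩ := this
    exact ⟨l, hl0, hl1, by nlinarith [mul_le_mul_of_nonneg_left htq (sq_nonneg b)]⟩
  rcases le_or_gt (R * a * t) 1 with hRat | hRat
  · refine ⟨0, le_rfl, zero_le_one, ?_⟩
    have : 0 ≤ (a ^ 2 - 1) * (1 - R ^ 2 * t ^ 2) :=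
      mul_nonneg (by nlinarith) (by nlinarith [mul_nonneg (by linarith : (0 : ℝ) ≤ R) ht])
    nlinarith
  · set l := (R * a * t - 1) / (R ^ 2 - 1)
    have hgap : (1 - l) ^ 2 - ((a * t - l * R) ^ 2 + b ^ 2 * (1 - t ^ 2))
        = (R * t - a) ^ 2 / (R ^ 2 - 1) := by
      simp only [l]
      field_simp
      linear_combination (t ^ 2 - 1) * (R ^ 2 - 1) * hb
    refine ⟨l, by positivity, (div_le_one hc).2 ?_, ?_⟩
    · nlinarith [mul_le_mul_of_nonneg_left ht1 (by positivity : 0 ≤ R * a),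
        mul_le_mul_of_nonneg_left haR (by linarith : 0 ≤ R)]
    · linarith [hgap ▸ (by positivity : 0 ≤ (R * t - a) ^ 2 / (R ^ 2 - 1))]

section stretch

variable {E : Type*} [NormedAddCommGroup E] [InnerProductSpace ℝ E]

theorem norm_smul_add_smul_sq_of_inner_eq_zero {u w : E} (huw : ⟪u, w⟫ = 0) (c d : ℝ) :
    ‖c • u + d • w‖ ^ 2 = c ^ 2 * ‖u‖ ^ 2 + d ^ 2 * ‖w‖ ^ 2 := by
  rw [norm_add_sq_real, real_inner_smul_left, real_inner_smul_right, huw, norm_smul, norm_smul,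
    mul_pow, mul_pow, Real.norm_eq_abs, Real.norm_eq_abs, sq_abs, sq_abs]
  ring

noncomputable def stretchAlong (u : E) (a b : ℝ) : E →ₗ[ℝ] E :=
  b • LinearMap.id + (a - b) • (innerₗ E u).smulRight u

theorem stretchAlong_apply (u : E) (a b : ℝ) (y : E) :
    stretchAlong u a b y = b • y + ((a - b) * ⟪u, y⟫) • u := by
  simp [stretchAlong, mul_smul]

theorem det_stretchAlong [FiniteDimensional ℝ E] {u : E} (hu : ‖u‖ = 1) (a b : ℝ) :
    LinearMap.det (stretchAlong u a b) = a * b ^ (finrank ℝ E - 1) := by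
  have hu0 : u ≠ 0 := norm_ne_zero_iff.1 (by simp [hu])
  have hrank := (ℝ ∙ u).finrank_add_finrank_orthogonal
  rw [finrank_span_singleton hu0] at hrank
  rw [LinearMap.det_eq_pow_mul_pow_of_isCompl (ℝ ∙ u).isCompl_orthogonal (a := a) (b := b),
    finrank_span_singleton hu0, pow_one, ← hrank, Nat.add_sub_cancel_left]
  · intro x hx
    obtain ⟨c, rfl⟩ := Submodule.mem_span_singleton.1 hx
    rw [stretchAlong_apply, real_inner_smul_right, real_inner_self_eq_norm_sq, hu]
    module
  · intro x hx
    rw [stretchAlong_apply, Submodule.mem_orthogonal_singleton_iff_inner_right.1 hx]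
    simp

theorem stretchAlong_image_closedBall_subset {C : Set E} (hconv : Convex ℝ C)
    (hsymm : ∀ x ∈ C, -x ∈ C) (hB : closedBall (0 : E) 1 ⊆ C) {u : E} (hu : ‖u‖ = 1)
    {R a b : ℝ} (hRu : R • u ∈ C) (hR : 1 < R) (ha : 1 ≤ a) (haR : a ≤ R)
    (hb : b ^ 2 * (R ^ 2 - 1) = R ^ 2 - a ^ 2) :
    stretchAlong u a b '' closedBall 0 1 ⊆ C := by
  suffices key : ∀ y ∈ closedBall (0 : E) 1, 0 ≤ ⟪u, y⟫ → stretchAlong u a b y ∈ C by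
    rintro _ ⟨y, hy, rfl⟩
    rcases le_total 0 ⟪u, y⟫ with hy0 | hy0
    · exact key y hy hy0
    · simpa using hsymm _ (key (-y) (by simpa using hy) (by simpa [inner_neg_right] using hy0))
  intro y hy ht
  set t := ⟪u, y⟫
  set w := y - t • u
  have huw : ⟪u, w⟫ = 0 := by
    simp [w, t, inner_sub_right, real_inner_smul_right, hu]
  have hyw : t ^ 2 + ‖w‖ ^ 2 ≤ 1 := by
    have hy' : ‖t • u + (1 : ℝ) • w‖ ≤ 1 := by simpa [w] using hy
    have := norm_smul_add_smul_sq_of_inner_eq_zero huw t 1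
    rw [hu] at this
    nlinarith [norm_nonneg (t • u + (1 : ℝ) • w)]
  obtain ⟨l, hl0, hl1, hl⟩ := exists_sq_add_sq_mul_le hR ha haR hb ht (sq_nonneg ‖w‖) hyw
  refine hconv.mem_of_norm_sub_smul_le hB hRu hl0 hl1 ?_
  have hdecomp : stretchAlong u a b y - l • R • u = (a * t - l * R) • u + b • w := by
    rw [stretchAlong_apply]
    simp only [w]
    module
  rw [← sq_le_sq₀ (norm_nonneg _) (by linarith), hdecomp,
    norm_smul_add_smul_sq_of_inner_eq_zero huw, hu, one_pow, mul_one]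
  exact hl

theorem exists_linearEquiv_image_closedBall_subset_one_lt_abs_det [FiniteDimensional ℝ E]
    {C : Set E} (hconv : Convex ℝ C) (hsymm : ∀ x ∈ C, -x ∈ C) (hB : closedBall (0 : E) 1 ⊆ C)
    {x : E} (hx : x ∈ C) (hlt : √(finrank ℝ E) < ‖x‖) :
    ∃ M : E ≃ₗ[ℝ] E, M '' closedBall 0 1 ⊆ C ∧ 1 < |LinearMap.det (M : E →ₗ[ℝ] E)| := by
  have hx0 : x ≠ 0 := by
    rintro rfl
    exact (Real.sqrt_nonneg _).not_gt (by simpa using hlt)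
  obtain ⟨m, hm⟩ : ∃ m, finrank ℝ E = m + 1 :=
    Nat.exists_eq_succ_of_ne_zero (finrank_pos_iff_exists_ne_zero.2 ⟨x, hx0⟩).ne'
  have hR : (m : ℝ) + 1 < ‖x‖ ^ 2 := by
    rw [hm, Nat.cast_succ, Real.sqrt_lt' (by positivity)] at hlt
    exact hlt
  have hR1 : 1 < ‖x‖ := by nlinarith [norm_nonneg x, m.cast_nonneg (α := ℝ)]
  obtain ⟨a, b, ha, haR, hb, hab⟩ := exists_semiaxes m (norm_nonneg x) hR
  set u := ‖x‖⁻¹ • x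
  have hu : ‖u‖ = 1 := by
    rw [norm_smul, norm_inv, norm_norm, inv_mul_cancel₀ (norm_ne_zero_iff.2 hx0)]
  have hdet : LinearMap.det (stretchAlong u a b) = a * b ^ m := by
    rw [det_stretchAlong hu, hm, Nat.add_sub_cancel]
  refine ⟨(stretchAlong u a b).equivOfDetNeZero (hdet ▸ abs_pos.1 (one_pos.trans hab)), ?_, by
    simpa [hdet] using hab⟩
  exact stretchAlong_image_closedBall_subset hconv hsymm hB hu
    (by rwa [smul_inv_smul₀ (norm_ne_zero_iff.2 hx0)]) hR1 ha haR hb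

end stretch

theorem john_sqrt_containment_general (n : ℕ)
    (C : Set (EuclideanSpace ℝ (Fin n)))
    (hC_conv : Convex ℝ C)
    (hC_symm : C = -C)
    (D : Set (EuclideanSpace ℝ (Fin n)))
    (hD_ell : IsEllipsoid n D) (hDC : D ⊆ C)
    (hD_max : ∀ D' : Set (EuclideanSpace ℝ (Fin n)),
      IsEllipsoid n D' → D' ⊆ C → volume D' ≤ volume D) :
    C ⊆ Real.sqrt n • D := by
  obtain ⟨L, rfl⟩ := hD_ell
  intro x hx
  by_contra hxD
  have hlt : √(finrank ℝ (EuclideanSpace ℝ (Fin n))) < ‖L.symm x‖ := by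
    rw [finrank_euclideanSpace_fin]
    by_contra! hle
    refine hxD ?_
    rw [← image_smul_set, smul_unitClosedBall, Real.norm_of_nonneg (Real.sqrt_nonneg _)]
    exact ⟨L.symm x, mem_closedBall_zero_iff.2 hle, L.apply_symm_apply x⟩
  have hsymm : ∀ y ∈ L.symm '' C, -y ∈ L.symm '' C := by
    rintro _ ⟨c, hc, rfl⟩
    exact ⟨-c, by rwa [hC_symm, Set.neg_mem_neg], map_neg _ c⟩
  have hB : closedBall 0 1 ⊆ L.symm '' C := fun y hy =>
    ⟨L y, hDC (Set.mem_image_of_mem L hy), L.symm_apply_apply y⟩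
  obtain ⟨M, hMC, hM⟩ := exists_linearEquiv_image_closedBall_subset_one_lt_abs_det
    (hC_conv.linear_image (L.symm : _ →ₗ[ℝ] _)) hsymm hB (Set.mem_image_of_mem L.symm hx) hlt
  have hD' : L '' (M '' closedBall 0 1) ⊆ C := by
    rintro _ ⟨y, hy, rfl⟩
    obtain ⟨c, hc, hcy⟩ := hMC hy
    simpa [← hcy] using hc
  refine (hD_max _ ⟨M.trans L, by rw [Set.image_image]; rfl⟩ hD').not_gt ?_
  exact volume.addHaar_image_lt_addHaar_image_image L hM
    (measure_closedBall_pos volume 0 one_pos).ne' measure_closedBall_lt_top.ne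

/-- **John's `√n` containment.** If `D` is an ellipsoid of maximal volume contained in a
symmetric convex body `C ⊆ ℝⁿ`, then `C ⊆ √n • D`. -/
theorem john_sqrt_containment (n : ℕ) (hn : 1 ≤ n)
    (C : Set (EuclideanSpace ℝ (Fin n)))
    (hC_conv : Convex ℝ C) (hC_comp : IsCompact C)
    (hC_int : (interior C).Nonempty) (hC_symm : C = -C)
    (D : Set (EuclideanSpace ℝ (Fin n)))
    (hD_ell : IsEllipsoid n D) (hDC : D ⊆ C)
    (hD_max : ∀ D' : Set (EuclideanSpace ℝ (Fin n)),
      IsEllipsoid n D' → D' ⊆ C → volume D' ≤ volume D) :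
    C ⊆ Real.sqrt n • D :=
  john_sqrt_containment_general n C hC_conv hC_symm D hD_ell hDC hD_max
end

section
/- For every integer n ≥ 1 and every norm ‖·‖ on ℝⁿ, there exists an inner product on ℝⁿ whose associated norm |·| satisfies |x| ≤ ‖x‖ ≤ √n · |x| for all x ∈ ℝⁿ. In particular, the Banach–Mazur distance from (ℝⁿ, ‖·‖) to Euclidean space ℓ²ₙ is at most √n. -/
open Module

/-!
John's theorem for symmetric convex bodies. Among the linear maps `T` that send the Euclidean
unit ball into the unit ball of `p`, compactness provides one of maximal `|det T|`. If some `q`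
had `p (T q) ≤ 1` but `‖q‖ > √d` (`d` the dimension), then `T` would still send the convex hull
of the Euclidean ball and `±q` into the `p`-ball, and that hull contains the ellipsoid obtained by
stretching the ball by a factor `a` along `q` and by `b` across it, where `a * b ^ (d - 1) > 1`:
this contradicts maximality. Hence `p (T u) ≤ ‖u‖ ≤ √d * p (T u)`, and `x ↦ ‖T⁻¹ x‖ / √d` is the
Euclidean norm.
-/

/-- With `B = b ^ 2`, the hypothesis `hB` makes the ellipse with semi-axes `a` and `b` tangent to
the two lines through `(s, 0)` tangent to the unit circle. -/
lemma exists_disc_center_of_mem_ellipse {s a B w v r : ℝ} (hs : 1 < s) (ha : 1 ≤ a)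
    (has : a ≤ s) (hB : B * (s ^ 2 - 1) = s ^ 2 - a ^ 2) (hw : 0 ≤ w) (hr : 0 ≤ r)
    (hwv : w ^ 2 + v ^ 2 ≤ r ^ 2) :
    ∃ l, 0 ≤ l ∧ l ≤ r ∧ (a * w - l * s) ^ 2 + B * v ^ 2 ≤ (r - l) ^ 2 := by
  have hD : 0 < s ^ 2 - 1 := by nlinarith
  have hwr : w ≤ r := abs_le_of_sq_le_sq' (by nlinarith) hr |>.2
  have hsw : 0 ≤ s * w := mul_nonneg (by linarith) hw
  have haw : a * w ≤ s * r := by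
    nlinarith [mul_le_mul_of_nonneg_left hwr (by linarith : (0 : ℝ) ≤ a)]
  have hBv : B * v ^ 2 * (s ^ 2 - 1) ≤ (s ^ 2 - a ^ 2) * (r ^ 2 - w ^ 2) := by
    rw [mul_right_comm, hB]; exact mul_le_mul_of_nonneg_left (by linarith) (by nlinarith)
  rcases le_or_gt (s * (a * w)) r with hc | hc
  · refine ⟨0, le_rfl, hr, ?_⟩
    have hswr : s * w ≤ r := le_trans (by nlinarith [mul_nonneg hsw (by linarith : 0 ≤ a - 1)]) hc
    suffices (a ^ 2 * w ^ 2 + B * v ^ 2 - r ^ 2) * (s ^ 2 - 1) ≤ 0 by nlinarith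
    nlinarith [mul_nonneg (by nlinarith : 0 ≤ a ^ 2 - 1) (by nlinarith : 0 ≤ r ^ 2 - s ^ 2 * w ^ 2)]
  · -- the disc of radius `r - l` about `(l * s, 0)` touches the tangent lines at abscissa `a * w`
    set l := (s * (a * w) - r) / (s ^ 2 - 1)
    have hl : l * (s ^ 2 - 1) = s * (a * w) - r := div_mul_cancel₀ _ hD.ne'
    refine ⟨l, div_nonneg (by linarith) hD.le, ?_, ?_⟩
    · rw [div_le_iff₀ hD]; nlinarith
    · have e1 : (a * w - l * s) * (s ^ 2 - 1) = r * s - a * w := by linear_combination (-s) * hl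
      have e2 : (r - l) * (s ^ 2 - 1) = s * (r * s - a * w) := by linear_combination (-1) * hl
      have key : B * v ^ 2 * (s ^ 2 - 1) ≤ (r * s - a * w) ^ 2 := by
        nlinarith [sq_nonneg (s * w - a * r)]
      refine le_of_mul_le_mul_right ?_ (pow_pos hD 2)
      nlinarith [mul_le_mul_of_nonneg_right key hD.le]

lemma exists_abs_le_of_mem_ellipse {s a B w v r : ℝ} (hs : 1 < s) (ha : 1 ≤ a) (has : a ≤ s)
    (hB : B * (s ^ 2 - 1) = s ^ 2 - a ^ 2) (hr : 0 ≤ r) (hwv : w ^ 2 + v ^ 2 ≤ r ^ 2) :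
    ∃ t, |t| ≤ r ∧ (a * w - t * s) ^ 2 + B * v ^ 2 ≤ (r - |t|) ^ 2 := by
  rcases le_total 0 w with hw | hw
  · obtain ⟨l, hl0, hlr, hl⟩ := exists_disc_center_of_mem_ellipse hs ha has hB hw hr hwv
    exact ⟨l, by rwa [abs_of_nonneg hl0], by rwa [abs_of_nonneg hl0]⟩
  · obtain ⟨l, hl0, hlr, hl⟩ := exists_disc_center_of_mem_ellipse (v := v) hs ha has hB
      (neg_nonneg.2 hw) hr (by rwa [neg_sq])
    refine ⟨-l, by rwa [abs_neg, abs_of_nonneg hl0], ?_⟩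
    rw [abs_neg, abs_of_nonneg hl0]
    linarith [show (a * w - -l * s) ^ 2 = (a * -w - l * s) ^ 2 by ring]

lemma exists_stretch_factors {s : ℝ} {m : ℕ} (hs : 0 < s) (hm : (m : ℝ) + 1 < s ^ 2) :
    ∃ a b : ℝ, 1 ≤ a ∧ a ≤ s ∧ 0 < b ∧ b ^ 2 * (s ^ 2 - 1) = s ^ 2 - a ^ 2 ∧ 1 < a * b ^ m := by
  have hm0 := m.cast_nonneg (α := ℝ)
  set D := s ^ 2 - 1
  have hD : 0 < D := by linarith
  -- `a ^ 2 = 1 + ε` and `b ^ 2 = 1 - ε / D`; by Bernoulli any `ε < D` with `m * ε < D - m` works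
  set ε := (D - m) / (2 * (m + 1)) with hε
  have hε0 : 0 < ε := div_pos (by linarith) (by positivity)
  have hεD : ε < D := by rw [div_lt_iff₀ (by positivity)]; nlinarith
  have hmε : m * ε < D - m := by
    rw [hε, mul_div_assoc', div_lt_iff₀ (by positivity)]; nlinarith
  have hb2 : 0 < 1 - ε / D := by rw [sub_pos, div_lt_one hD]; exact hεD
  refine ⟨√(1 + ε), √(1 - ε / D), Real.one_le_sqrt.2 (by linarith),
    (Real.sqrt_le_left hs.le).2 (by linarith), Real.sqrt_pos.2 hb2, ?_, ?_⟩
  · rw [Real.sq_sqrt hb2.le, Real.sq_sqrt (by linarith)]; field_simp; ring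
  · have hbern : 1 + m * -(ε / D) ≤ (1 + -(ε / D)) ^ m :=
      one_add_mul_le_pow (by linarith [(div_lt_one hD).2 hεD]) m
    rw [← one_lt_sq_iff₀ (by positivity), mul_pow, ← pow_mul, mul_comm m 2, pow_mul,
      Real.sq_sqrt (by linarith), Real.sq_sqrt hb2.le]
    calc (1 : ℝ) < (1 + ε) * (1 - m * (ε / D)) := by
          rw [mul_div_assoc', one_sub_div hD.ne', mul_div_assoc', lt_div_iff₀ hD, one_mul]
          nlinarith
      _ ≤ (1 + ε) * (1 - ε / D) ^ m := by gcongr; simpa [sub_eq_add_neg] using hbern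

section Seminorm

variable {E : Type*} [NormedAddCommGroup E] [NormedSpace ℝ E] [FiniteDimensional ℝ E]

theorem Seminorm.continuous_of_finiteDimensional (p : Seminorm ℝ E) : Continuous p :=
  p.convexOn.locallyLipschitz.continuous

theorem Seminorm.exists_pos_mul_norm_le (p : Seminorm ℝ E) (hp : ∀ x, p x = 0 → x = 0) :
    ∃ c, 0 < c ∧ ∀ x, c * ‖x‖ ≤ p x := by
  obtain ⟨c, hc, hcp⟩ := (isCompact_sphere (0 : E) 1).exists_forall_le'
    p.continuous_of_finiteDimensional.continuousOn (a := 0) fun x hx ↦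
      (apply_nonneg p x).lt_of_ne' fun h ↦ by simp [hp x h] at hx
  refine ⟨c, hc, fun x ↦ ?_⟩
  rcases eq_or_ne x 0 with rfl | hx
  · simp
  have hx' : 0 < ‖x‖ := norm_pos_iff.2 hx
  have := hcp (‖x‖⁻¹ • x) (by simp [norm_smul, hx'.ne'])
  rwa [map_smul_eq_mul, norm_inv, norm_norm, inv_mul_eq_div, le_div_iff₀ hx'] at this

end Seminorm

variable {E : Type*} [NormedAddCommGroup E] [InnerProductSpace ℝ E]

noncomputable def Submodule.stretch (K : Submodule ℝ E) [K.HasOrthogonalProjection] (a b : ℝ) :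
    E →L[ℝ] E :=
  a • K.starProjection + b • Kᗮ.starProjection

theorem Submodule.det_stretch [FiniteDimensional ℝ E] (K : Submodule ℝ E) (a b : ℝ) :
    LinearMap.det (K.stretch a b : E →ₗ[ℝ] E) = a ^ finrank ℝ K * b ^ finrank ℝ Kᗮ := by
  let φ := K.prodEquivOfIsCompl _ K.isCompl_orthogonal
  have hφ : φ.symm.toLinearMap ∘ₗ (K.stretch a b : E →ₗ[ℝ] E) ∘ₗ φ.toLinearMap =
      (a • LinearMap.id).prodMap (b • LinearMap.id) := by
    have hK (x : Kᗮ) : K.starProjection x = 0 := K.starProjection_apply_eq_zero_iff.2 x.2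
    ext x <;> simp [φ, Submodule.stretch, hK]
  rw [← LinearMap.det_conj _ φ.symm, LinearEquiv.symm_symm, hφ, LinearMap.det_prodMap,
    LinearMap.det_smul, LinearMap.det_smul, LinearMap.det_id, LinearMap.det_id, mul_one, mul_one]

/-- Equivalently `stretch a b u = z + t • (s • e)` with `|t| + ‖z‖ ≤ ‖u‖`: the stretched ball lies
in the convex hull of the ball and `±‖u‖ • s • e`. -/
lemma exists_abs_add_norm_stretch_sub_le {s a b : ℝ} (hs : 1 < s) (ha : 1 ≤ a) (has : a ≤ s)
    (hb : b ^ 2 * (s ^ 2 - 1) = s ^ 2 - a ^ 2) {e : E} (he : ‖e‖ = 1) (u : E) :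
    ∃ t : ℝ, |t| + ‖(ℝ ∙ e).stretch a b u - (t * s) • e‖ ≤ ‖u‖ := by
  set K := ℝ ∙ e
  obtain ⟨w, hw⟩ := Submodule.mem_span_singleton.1 (K.starProjection_apply_mem u)
  set u' := Kᗮ.starProjection u
  have pythagoras (c d : ℝ) : ‖c • e + d • u'‖ ^ 2 = c ^ 2 + d ^ 2 * ‖u'‖ ^ 2 := by
    rw [norm_add_sq_real, Submodule.inner_right_of_mem_orthogonal
      (K.smul_mem _ (Submodule.mem_span_singleton_self e))
      (Kᗮ.smul_mem _ (Kᗮ.starProjection_apply_mem u)),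
      norm_smul, norm_smul, he, Real.norm_eq_abs, Real.norm_eq_abs]
    simp only [mul_pow, sq_abs]
    ring
  have hu : w ^ 2 + ‖u'‖ ^ 2 = ‖u‖ ^ 2 := by simpa [hw, u'] using (pythagoras w 1).symm
  obtain ⟨t, ht, hdisc⟩ := exists_abs_le_of_mem_ellipse hs ha has hb (norm_nonneg u) hu.le
  have hAu : K.stretch a b u - (t * s) • e = (a * w - t * s) • e + b • u' := by
    simp only [Submodule.stretch, add_apply, smul_apply, ← hw]
    module
  have : ‖K.stretch a b u - (t * s) • e‖ ≤ ‖u‖ - |t| := by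
    rwa [hAu, ← sq_le_sq₀ (norm_nonneg _) (by linarith), pythagoras]
  exact ⟨t, by linarith⟩

def inscribedMaps (p : Seminorm ℝ E) : Set (E →L[ℝ] E) := {T | ∀ u, p (T u) ≤ ‖u‖}

variable [FiniteDimensional ℝ E] {p : Seminorm ℝ E}

theorem isCompact_inscribedMaps (hp : ∀ x, p x = 0 → x = 0) : IsCompact (inscribedMaps p) := by
  obtain ⟨c, hc, hcp⟩ := p.exists_pos_mul_norm_le hp
  refine Metric.isCompact_of_isClosed_isBounded ?_ ?_
  · simp only [inscribedMaps, Set.ofPred_forall]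
    exact isClosed_iInter fun u ↦ isClosed_le (p.continuous_of_finiteDimensional.comp
      (ContinuousLinearMap.apply ℝ E u).continuous) continuous_const
  · refine (Metric.isBounded_closedBall (x := 0) (r := c⁻¹)).subset fun T hT ↦ ?_
    rw [mem_closedBall_zero_iff]
    refine T.opNorm_le_bound (by positivity) fun u ↦ ?_
    rw [inv_mul_eq_div, le_div_iff₀ hc, mul_comm]
    exact (hcp _).trans (hT u)

theorem exists_isMaxOn_abs_det_inscribedMaps (hp : ∀ x, p x = 0 → x = 0) :
    ∃ T ∈ inscribedMaps p, T.det ≠ 0 ∧ IsMaxOn (fun T ↦ |T.det|) (inscribedMaps p) T := by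
  obtain ⟨C, hC, hpC⟩ := p.bound_of_continuous_normedSpace p.continuous_of_finiteDimensional
  have hmem : C⁻¹ • ContinuousLinearMap.id ℝ E ∈ inscribedMaps p := fun u ↦ by
    simp only [smul_apply, ContinuousLinearMap.id_apply, map_smul_eq_mul, norm_inv,
      Real.norm_of_nonneg hC.le]
    rw [inv_mul_le_iff₀ hC]; exact hpC u
  obtain ⟨T, hT, hmax⟩ := (isCompact_inscribedMaps hp).exists_isMaxOn ⟨_, hmem⟩
    (continuous_abs.comp ContinuousLinearMap.continuous_det).continuousOn
  refine ⟨T, hT, fun h ↦ ?_, hmax⟩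
  have : |(C⁻¹ • ContinuousLinearMap.id ℝ E).det| ≤ |T.det| := hmax hmem
  rw [h, abs_zero, abs_nonpos_iff, ContinuousLinearMap.det, ContinuousLinearMap.toLinearMap_smul,
    ContinuousLinearMap.coe_id, LinearMap.det_smul, LinearMap.det_id, mul_one] at this
  exact (pow_pos (inv_pos.2 hC) _).ne' this

theorem exists_abs_det_lt_of_mem_inscribedMaps {T : E →L[ℝ] E} (hT : T ∈ inscribedMaps p)
    (hdet : T.det ≠ 0) {q : E} (hq : p (T q) ≤ 1) (hqd : √(finrank ℝ E) < ‖q‖) :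
    ∃ T' ∈ inscribedMaps p, |T.det| < |T'.det| := by
  set s := ‖q‖
  have hs : 0 < s := (Real.sqrt_nonneg _).trans_lt hqd
  set e := s⁻¹ • q
  have he : ‖e‖ = 1 := by
    rw [norm_smul, norm_inv, Real.norm_of_nonneg hs.le, inv_mul_cancel₀ hs.ne']
  have hqe : q = s • e := by simp [e, smul_smul, hs.ne']
  set K := ℝ ∙ e
  set m := finrank ℝ Kᗮ
  have hK : finrank ℝ K = 1 := finrank_span_singleton (norm_ne_zero_iff.1 (he ▸ one_ne_zero))
  have hms : (m : ℝ) + 1 < s ^ 2 := by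
    have := (Real.sqrt_lt' hs).1 hqd
    rwa [← K.finrank_add_finrank_orthogonal, hK, Nat.cast_add, Nat.cast_one, add_comm] at this
  obtain ⟨a, b, ha, has, hb, hab, habm⟩ := exists_stretch_factors hs hms
  have hs1 : 1 < s := by nlinarith [m.cast_nonneg (α := ℝ)]
  refine ⟨T.comp (K.stretch a b), fun u ↦ ?_, ?_⟩
  · obtain ⟨t, ht⟩ := exists_abs_add_norm_stretch_sub_le hs1 ha has hab he u
    set z := K.stretch a b u - (t * s) • e
    calc p (T (K.stretch a b u)) = p (T z + t • T q) := by
          rw [← map_smul, ← map_add, hqe, smul_smul]; simp [z]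
      _ ≤ p (T z) + |t| * p (T q) := by
          rw [← Real.norm_eq_abs, ← map_smul_eq_mul]; exact map_add_le_add p _ _
      _ ≤ ‖z‖ + |t| * 1 := by gcongr; exact hT z
      _ ≤ ‖u‖ := by linarith
  · simp only [ContinuousLinearMap.det]
    rw [ContinuousLinearMap.toLinearMap_comp, LinearMap.det_comp, K.det_stretch, hK, pow_one,
      abs_mul, abs_of_pos (by positivity : 0 < a * b ^ m)]
    exact lt_mul_of_one_lt_right (abs_pos.2 hdet) habm

theorem norm_le_sqrt_finrank_mul_of_isMaxOn (hp : ∀ x, p x = 0 → x = 0) {T : E →L[ℝ] E}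
    (hT : T ∈ inscribedMaps p) (hdet : T.det ≠ 0)
    (hmax : IsMaxOn (fun T ↦ |T.det|) (inscribedMaps p) T) (q : E) :
    ‖q‖ ≤ √(finrank ℝ E) * p (T q) := by
  by_contra! h
  have hr : 0 < p (T q) := (apply_nonneg p _).lt_of_ne' fun h0 ↦ by
    have : q = 0 :=
      (LinearMap.equivOfDetNeZero (T : E →ₗ[ℝ] E) hdet).injective (by simpa using hp _ h0)
    simp [this] at h
  obtain ⟨T', hT', hlt⟩ := exists_abs_det_lt_of_mem_inscribedMaps hT hdet (q := (p (T q))⁻¹ • q)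
    (by rw [map_smul, map_smul_eq_mul, norm_inv, Real.norm_of_nonneg hr.le, inv_mul_cancel₀ hr.ne'])
    (by rwa [norm_smul, norm_inv, Real.norm_of_nonneg hr.le, inv_mul_eq_div, lt_div_iff₀ hr])
  exact (hmax hT').not_gt hlt

theorem exists_linearEquiv_norm_le_sqrt_finrank_mul (hp : ∀ x, p x = 0 → x = 0) :
    ∃ f : E ≃ₗ[ℝ] E, ∀ x, p x ≤ ‖f x‖ ∧ ‖f x‖ ≤ √(finrank ℝ E) * p x := by
  obtain ⟨T, hT, hdet, hmax⟩ := exists_isMaxOn_abs_det_inscribedMaps hp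
  let g := LinearMap.equivOfDetNeZero (T : E →ₗ[ℝ] E) hdet
  refine ⟨g.symm, fun x ↦ ?_⟩
  have hx : T (g.symm x) = x := g.apply_symm_apply x
  have hinner := hT (g.symm x)
  have houter := norm_le_sqrt_finrank_mul_of_isMaxOn hp hT hdet hmax (g.symm x)
  rw [hx] at hinner houter
  exact ⟨hinner, houter⟩

/-- For every norm `N` on `ℝⁿ` there is an inner product on `ℝⁿ` whose associated
Euclidean norm `|x| = √(B x x)` satisfies `|x| ≤ N x ≤ √n * |x|` for all `x`.
In particular the Banach–Mazur distance from `(ℝⁿ, N)` to `ℓ²ₙ` is at most `√n`. -/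
theorem exists_inner_product_sqrt_comparison (n : ℕ) (hn : 1 ≤ n)
    (N : (Fin n → ℝ) → ℝ)
    (hN0 : ∀ x, N x = 0 ↔ x = 0)
    (hNs : ∀ (a : ℝ) (x), N (a • x) = |a| * N x)
    (hNt : ∀ x y, N (x + y) ≤ N x + N y) :
    ∃ B : (Fin n → ℝ) →ₗ[ℝ] (Fin n → ℝ) →ₗ[ℝ] ℝ,
      (∀ x y, B x y = B y x) ∧
      (∀ x, x ≠ 0 → 0 < B x x) ∧
      (∀ x, Real.sqrt (B x x) ≤ N x ∧ N x ≤ Real.sqrt n * Real.sqrt (B x x)) := by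
  let ι := WithLp.linearEquiv 2 ℝ (Fin n → ℝ)
  let p : Seminorm ℝ (EuclideanSpace ℝ (Fin n)) := (Seminorm.of N hNt hNs).comp ι.toLinearMap
  obtain ⟨f, hf⟩ := exists_linearEquiv_norm_le_sqrt_finrank_mul (p := p) fun x hx ↦
    ι.injective (by simpa [p] using (hN0 _).1 hx)
  rw [finrank_euclideanSpace_fin] at hf
  let g := ι.symm.trans f
  have hn0 : 0 < √n := Real.sqrt_pos.2 (by exact_mod_cast hn)
  let B := (n : ℝ)⁻¹ • (innerₗ _).compl₁₂ g.toLinearMap g.toLinearMap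
  have hB (x : Fin n → ℝ) : B x x = (‖g x‖ / √n) ^ 2 := by
    simp [B, div_pow, Real.sq_sqrt (Nat.cast_nonneg n), inv_mul_eq_div]
  refine ⟨B, fun x y ↦ by simp [B, real_inner_comm], fun x hx ↦ ?_, fun x ↦ ?_⟩
  · have : g x ≠ 0 := by simpa using hx
    rw [hB]; positivity
  · rw [hB, Real.sqrt_sq (by positivity), div_le_iff₀' hn0, mul_div_cancel₀ _ hn0.ne']
    exact (hf (ι.symm x)).symm
end

section
/- (Volume of the unit ball of a direct sum) Let n, m ≥ 1, let ‖·‖_E be a norm on ℝⁿ and ‖·‖_F a norm on ℝᵐ, and let ς be a norm on ℝ² that is invariant under sign changes of the coordinates and satisfies ς(1,0) = ς(0,1) = 1. Equip ℝⁿ × ℝᵐ with the norm ‖(x,y)‖ := ς(‖x‖_E, ‖y‖_F) and with the product of the Lebesgue measures. Then the ratio vol({(x,y) : ‖(x,y)‖ ≤ 1}) / ( vol({x : ‖x‖_E ≤ 1}) · vol({y : ‖y‖_F ≤ 1}) ) lies between binom(n+m, n)^{-1} and 1. -/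
/-!
The volume of the unit ball of a norm `N` on a `d`-dimensional space is `(∫ exp (-N)) / d!`.
For the ℓ¹-sum `N_E x + N_F y` the integral factors, so its unit ball has volume exactly
`vol B_E * vol B_F / binom (n + m) n`. Since `max a b ≤ ς (a, b) ≤ a + b` for `a, b ≥ 0`, the
unit ball of `ς (N_E, N_F)` lies between this ℓ¹-ball and `B_E × B_F`.
-/

open MeasureTheory Module

section Volume

variable {E F : Type*} [NormedAddCommGroup E] [NormedSpace ℝ E] [FiniteDimensional ℝ E]
  [MeasurableSpace E] (μ : Measure E) [μ.IsAddHaarMeasure]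

theorem Seminorm.measure_le_one_pos (p : Seminorm ℝ E) : 0 < μ {x | p x ≤ 1} := by
  have hp : Continuous p := continuousOn_univ.mp (p.convexOn.continuousOn isOpen_univ)
  have hopen : IsOpen {x | p x < 1} := isOpen_lt hp continuous_const
  exact (hopen.measure_pos μ ⟨0, by simp⟩).trans_le
    (measure_mono fun x (hx : p x < 1) => hx.le)

variable [BorelSpace E] [NormedAddCommGroup F] [NormedSpace ℝ F] [FiniteDimensional ℝ F]
  [MeasurableSpace F] [BorelSpace F] (ν : Measure F) [ν.IsAddHaarMeasure]

theorem Seminorm.measure_le_one_eq_integral_div_factorial [Nontrivial E] (p : Seminorm ℝ E)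
    (hp : ∀ x, p x = 0 → x = 0) :
    μ {x | p x ≤ 1} = .ofReal ((∫ x, Real.exp (-p x) ∂μ) / (finrank ℝ E).factorial) := by
  rw [measure_le_eq_lt μ (map_zero p) (map_neg_eq_map p) (map_add_le_add p) (hp _)
      (fun r x => (map_smul_eq_mul p r x).le) 1,
    measure_lt_one_eq_integral_div_gamma μ (map_zero p) (map_neg_eq_map p) (map_add_le_add p)
      (hp _) (fun r x => (map_smul_eq_mul p r x).le) one_pos]
  simp_rw [Real.rpow_one, div_one, Real.Gamma_nat_eq_factorial]

theorem Seminorm.measure_prod_add_le_one_mul_choose [Nontrivial E] [Nontrivial F]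
    (p : Seminorm ℝ E) (q : Seminorm ℝ F) (hp : ∀ x, p x = 0 → x = 0)
    (hq : ∀ y, q y = 0 → y = 0) :
    μ.prod ν {z | p z.1 + q z.2 ≤ 1} * (finrank ℝ E + finrank ℝ F).choose (finrank ℝ E) =
      μ {x | p x ≤ 1} * ν {y | q y ≤ 1} := by
  let r : Seminorm ℝ (E × F) := p.comp (LinearMap.fst ℝ E F) + q.comp (LinearMap.snd ℝ E F)
  have hr : ∀ z, r z = 0 → z = 0 := fun z hz =>
    have h := (add_eq_zero_iff_of_nonneg (apply_nonneg p z.1) (apply_nonneg q z.2)).1 hz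
    Prod.ext (hp _ h.1) (hq _ h.2)
  have hint : ∫ z, Real.exp (-r z) ∂μ.prod ν =
      (∫ x, Real.exp (-p x) ∂μ) * ∫ y, Real.exp (-q y) ∂ν := by
    rw [← integral_prod_mul]
    congr 1 with z
    rw [← Real.exp_add, ← neg_add]
    rfl
  have hfact : ((finrank ℝ E + finrank ℝ F).choose (finrank ℝ E) : ℝ) *
      (finrank ℝ E).factorial * (finrank ℝ F).factorial =
        (finrank ℝ E + finrank ℝ F).factorial := by
    rw [Nat.choose_symm_add]
    exact_mod_cast Nat.add_choose_mul_factorial_mul_factorial _ _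
  have hIp : 0 ≤ ∫ x, Real.exp (-p x) ∂μ := integral_nonneg fun _ => (Real.exp_pos _).le
  have hIq : 0 ≤ ∫ y, Real.exp (-q y) ∂ν := integral_nonneg fun _ => (Real.exp_pos _).le
  have hr_ball := r.measure_le_one_eq_integral_div_factorial (μ.prod ν) hr
  rw [finrank_prod, hint] at hr_ball
  change μ.prod ν {z | r z ≤ 1} * _ = _
  rw [hr_ball, p.measure_le_one_eq_integral_div_factorial μ hp,
    q.measure_le_one_eq_integral_div_factorial ν hq, ← ENNReal.ofReal_natCast,
    ← ENNReal.ofReal_mul (by positivity), ← ENNReal.ofReal_mul (by positivity)]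
  have hchoose : ((finrank ℝ E + finrank ℝ F).choose (finrank ℝ E) : ℝ) ≠ 0 :=
    Nat.cast_ne_zero.mpr (Nat.choose_pos (Nat.le_add_right _ _)).ne'
  congr 1
  rw [← hfact]
  field_simp

theorem Seminorm.measure_le_one_ne_top [Nontrivial E] (p : Seminorm ℝ E)
    (hp : ∀ x, p x = 0 → x = 0) : μ {x | p x ≤ 1} ≠ ⊤ := by
  rw [p.measure_le_one_eq_integral_div_factorial μ hp]
  exact ENNReal.ofReal_ne_top

theorem Seminorm.measure_div_measure_mul_measure_mem_Icc [Nontrivial E] [Nontrivial F]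
    (p : Seminorm ℝ E) (q : Seminorm ℝ F) (hp : ∀ x, p x = 0 → x = 0)
    (hq : ∀ y, q y = 0 → y = 0) {S : Set (E × F)} (hS₁ : {z | p z.1 + q z.2 ≤ 1} ⊆ S)
    (hS₂ : S ⊆ {x | p x ≤ 1} ×ˢ {y | q y ≤ 1}) :
    (μ.prod ν S).toReal / ((μ {x | p x ≤ 1}).toReal * (ν {y | q y ≤ 1}).toReal) ∈
      Set.Icc ((finrank ℝ E + finrank ℝ F).choose (finrank ℝ E) : ℝ)⁻¹ 1 := by
  have hA := ENNReal.toReal_pos (p.measure_le_one_pos μ).ne' (p.measure_le_one_ne_top μ hp)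
  have hB := ENNReal.toReal_pos (q.measure_le_one_pos ν).ne' (q.measure_le_one_ne_top ν hq)
  have hAB_top :=
    ENNReal.mul_ne_top (p.measure_le_one_ne_top μ hp) (q.measure_le_one_ne_top ν hq)
  have hSAB : μ.prod ν S ≤ μ {x | p x ≤ 1} * ν {y | q y ≤ 1} :=
    (measure_mono hS₂).trans_eq (Measure.prod_prod _ _)
  have hS_top := ne_top_of_le_ne_top hAB_top hSAB
  have hLS := ENNReal.toReal_mono hS_top (measure_mono (μ := μ.prod ν) hS₁)
  have hL := congrArg ENNReal.toReal (p.measure_prod_add_le_one_mul_choose μ ν q hp hq)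
  rw [ENNReal.toReal_mul, ENNReal.toReal_mul, ENNReal.toReal_natCast] at hL
  have hSAB_real := ENNReal.toReal_mono hAB_top hSAB
  rw [ENNReal.toReal_mul] at hSAB_real
  have hchoose : ((finrank ℝ E + finrank ℝ F).choose (finrank ℝ E) : ℝ) ≠ 0 :=
    Nat.cast_ne_zero.mpr (Nat.choose_pos (Nat.le_add_right _ _)).ne'
  constructor
  · rw [le_div_iff₀ (mul_pos hA hB), ← hL, mul_comm, mul_inv_cancel_right₀ hchoose]
    exact hLS
  · exact div_le_one_of_le₀ hSAB_real (mul_pos hA hB).le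

end Volume

theorem Seminorm.apply_le_abs_add_abs (s : Seminorm ℝ (ℝ × ℝ)) (h₁ : s (1, 0) = 1)
    (h₂ : s (0, 1) = 1) (a b : ℝ) : s (a, b) ≤ |a| + |b| := by
  have h := map_add_le_add s (a • (1, 0)) (b • (0, 1))
  rw [map_smul_eq_mul, map_smul_eq_mul, h₁, h₂] at h
  simpa using h

theorem Seminorm.abs_fst_le_apply (s : Seminorm ℝ (ℝ × ℝ)) (h₁ : s (1, 0) = 1)
    (h : ∀ a b, s (a, -b) = s (a, b)) (a b : ℝ) : |a| ≤ s (a, b) := by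
  have h₂ := map_add_le_add s (a, b) (a, -b)
  have : ((a, b) + (a, -b) : ℝ × ℝ) = (2 * a) • (1, 0) := by ext <;> simp; ring
  rw [this, map_smul_eq_mul, h, h₁, Real.norm_eq_abs, abs_mul, abs_two] at h₂
  linarith

theorem Seminorm.abs_snd_le_apply (s : Seminorm ℝ (ℝ × ℝ)) (h₁ : s (0, 1) = 1)
    (h : ∀ a b, s (-a, b) = s (a, b)) (a b : ℝ) : |b| ≤ s (a, b) := by
  have h₂ := map_add_le_add s (a, b) (-a, b)
  have : ((a, b) + (-a, b) : ℝ × ℝ) = (2 * b) • (0, 1) := by ext <;> simp; ring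
  rw [this, map_smul_eq_mul, h, h₁, Real.norm_eq_abs, abs_mul, abs_two] at h₂
  linarith

theorem volume_ratio_direct_sum_general (n m : ℕ) (hn : 1 ≤ n) (hm : 1 ≤ m)
    (NE : (Fin n → ℝ) → ℝ)
    (hNE0 : ∀ x, NE x = 0 ↔ x = 0)
    (hNEs : ∀ (a : ℝ) (x), NE (a • x) = |a| * NE x)
    (hNEt : ∀ x y, NE (x + y) ≤ NE x + NE y)
    (NF : (Fin m → ℝ) → ℝ)
    (hNF0 : ∀ y, NF y = 0 ↔ y = 0)
    (hNFs : ∀ (a : ℝ) (y), NF (a • y) = |a| * NF y)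
    (hNFt : ∀ y z, NF (y + z) ≤ NF y + NF z)
    (ς : ℝ × ℝ → ℝ)
    (hςs : ∀ (a : ℝ) (q), ς (a • q) = |a| * ς q)
    (hςt : ∀ q r, ς (q + r) ≤ ς q + ς r)
    (hς_sign : ∀ a b : ℝ, ς (-a, b) = ς (a, b) ∧ ς (a, -b) = ς (a, b))
    (hς1 : ς (1, 0) = 1) (hς2 : ς (0, 1) = 1) :
    ((Nat.choose (n + m) n : ℝ))⁻¹ ≤
        (volume {z : (Fin n → ℝ) × (Fin m → ℝ) | ς (NE z.1, NF z.2) ≤ 1}).toReal /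
          ((volume {x : Fin n → ℝ | NE x ≤ 1}).toReal *
            (volume {y : Fin m → ℝ | NF y ≤ 1}).toReal) ∧
      (volume {z : (Fin n → ℝ) × (Fin m → ℝ) | ς (NE z.1, NF z.2) ≤ 1}).toReal /
          ((volume {x : Fin n → ℝ | NE x ≤ 1}).toReal *
            (volume {y : Fin m → ℝ | NF y ≤ 1}).toReal) ≤ 1 := by
  have : Nonempty (Fin n) := ⟨⟨0, hn⟩⟩
  have : Nonempty (Fin m) := ⟨⟨0, hm⟩⟩
  let pE : Seminorm ℝ (Fin n → ℝ) := .of NE hNEt hNEs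
  let pF : Seminorm ℝ (Fin m → ℝ) := .of NF hNFt hNFs
  let σ : Seminorm ℝ (ℝ × ℝ) := .of ς hςt hςs
  have h_l1_sub : {z : _ × _ | pE z.1 + pF z.2 ≤ 1} ⊆ {z | σ (pE z.1, pF z.2) ≤ 1} :=
    fun z hz => by
      have h := σ.apply_le_abs_add_abs hς1 hς2 (pE z.1) (pF z.2)
      rw [abs_of_nonneg (apply_nonneg pE z.1), abs_of_nonneg (apply_nonneg pF z.2)] at h
      exact h.trans hz
  have hσ_fst := σ.abs_fst_le_apply hς1 fun a b => (hς_sign a b).2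
  have hσ_snd := σ.abs_snd_le_apply hς2 fun a b => (hς_sign a b).1
  have h_sub_prod : {z : _ × _ | σ (pE z.1, pF z.2) ≤ 1} ⊆ {x | pE x ≤ 1} ×ˢ {y | pF y ≤ 1} :=
    fun z hz => ⟨(le_abs_self _).trans ((hσ_fst _ _).trans hz),
      (le_abs_self _).trans ((hσ_snd _ _).trans hz)⟩
  have key := pE.measure_div_measure_mul_measure_mem_Icc volume volume pF
    (fun x => (hNE0 x).1) (fun y => (hNF0 y).1) h_l1_sub h_sub_prod
  rwa [finrank_fin_fun, finrank_fin_fun] at key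

/-- **Volume of the unit ball of a direct sum.** For norms `NE` on `ℝⁿ`, `NF` on `ℝᵐ` and
a norm `ς` on `ℝ²` invariant under sign changes with `ς (1,0) = ς (0,1) = 1`, the volume
of the unit ball of the norm `(x, y) ↦ ς (NE x, NF y)` on `ℝⁿ × ℝᵐ` lies between
`binom (n+m) n ⁻¹` and `1` times the product of the volumes of the unit balls of `NE`
and `NF`. -/
theorem volume_ratio_direct_sum (n m : ℕ) (hn : 1 ≤ n) (hm : 1 ≤ m)
    (NE : (Fin n → ℝ) → ℝ)
    (hNE0 : ∀ x, NE x = 0 ↔ x = 0)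
    (hNEs : ∀ (a : ℝ) (x), NE (a • x) = |a| * NE x)
    (hNEt : ∀ x y, NE (x + y) ≤ NE x + NE y)
    (NF : (Fin m → ℝ) → ℝ)
    (hNF0 : ∀ y, NF y = 0 ↔ y = 0)
    (hNFs : ∀ (a : ℝ) (y), NF (a • y) = |a| * NF y)
    (hNFt : ∀ y z, NF (y + z) ≤ NF y + NF z)
    (ς : ℝ × ℝ → ℝ)
    (hς0 : ∀ q, ς q = 0 ↔ q = 0)
    (hςs : ∀ (a : ℝ) (q), ς (a • q) = |a| * ς q)
    (hςt : ∀ q r, ς (q + r) ≤ ς q + ς r)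
    (hς_sign : ∀ a b : ℝ, ς (-a, b) = ς (a, b) ∧ ς (a, -b) = ς (a, b))
    (hς1 : ς (1, 0) = 1) (hς2 : ς (0, 1) = 1) :
    ((Nat.choose (n + m) n : ℝ))⁻¹ ≤
        (volume {z : (Fin n → ℝ) × (Fin m → ℝ) | ς (NE z.1, NF z.2) ≤ 1}).toReal /
          ((volume {x : Fin n → ℝ | NE x ≤ 1}).toReal *
            (volume {y : Fin m → ℝ | NF y ≤ 1}).toReal) ∧
      (volume {z : (Fin n → ℝ) × (Fin m → ℝ) | ς (NE z.1, NF z.2) ≤ 1}).toReal /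
          ((volume {x : Fin n → ℝ | NE x ≤ 1}).toReal *
            (volume {y : Fin m → ℝ | NF y ≤ 1}).toReal) ≤ 1 :=
  volume_ratio_direct_sum_general n m hn hm NE hNE0 hNEs hNEt NF hNF0 hNFs hNFt ς hςs hςt hς_sign
    hς1 hς2
end

section
/- (Exact volume ratio for ℓᵖ direct sums) Let n, m ≥ 1, let ‖·‖_E be a norm on ℝⁿ and ‖·‖_F a norm on ℝᵐ, let p ≥ 1, and equip ℝⁿ × ℝᵐ with the norm ‖(x,y)‖ := (‖x‖_E^p + ‖y‖_F^p)^{1/p} and the product Lebesgue measure. Then vol({(x,y) : ‖(x,y)‖ ≤ 1}) / ( vol({x : ‖x‖_E ≤ 1}) · vol({y : ‖y‖_F ≤ 1}) ) = Γ(1 + n/p) · Γ(1 + m/p) / Γ(1 + (n+m)/p). In particular this ratio depends only on n, m and p, not on the norms ‖·‖_E and ‖·‖_F. -/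
/-!
For a norm `g` on a `d`-dimensional space and `p > 0`, integrating `exp (-g ^ p)` along rays gives
`vol {g ≤ 1} = (∫ exp (-g ^ p)) / Γ(1 + d / p)`. The `ℓᵖ` sum satisfies
`‖(x, y)‖ ^ p = ‖x‖_E ^ p + ‖y‖_F ^ p`, so its integral is the product of the two factor integrals
by Fubini, and in the ratio of the three volume formulas only the Gamma factors survive.
-/

open MeasureTheory Module

/-- A norm given as a bare function, independent of the `Norm` instance the space may already
carry (the sup norm on `Fin n → ℝ`). -/
structure IsNormFunction {E : Type*} [AddCommGroup E] [Module ℝ E] (g : E → ℝ) : Prop where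
  eq_zero_iff : ∀ x, g x = 0 ↔ x = 0
  map_smul : ∀ (a : ℝ) x, g (a • x) = |a| * g x
  add_le : ∀ x y, g (x + y) ≤ g x + g y

noncomputable def lpProdNorm {E F : Type*} (p : ℝ) (gE : E → ℝ) (gF : F → ℝ) (z : E × F) : ℝ :=
  (gE z.1 ^ p + gF z.2 ^ p) ^ (1 / p)

namespace IsNormFunction

section Algebraic

variable {E F : Type*} [AddCommGroup E] [Module ℝ E] [AddCommGroup F] [Module ℝ F]
  {g : E → ℝ}

theorem map_zero (hg : IsNormFunction g) : g 0 = 0 := (hg.eq_zero_iff 0).2 rfl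

theorem map_neg (hg : IsNormFunction g) (x : E) : g (-x) = g x := by
  rw [← neg_one_smul ℝ x, hg.map_smul, abs_neg, abs_one, one_mul]

theorem nonneg (hg : IsNormFunction g) (x : E) : 0 ≤ g x := by
  have h := hg.add_le x (-x)
  rw [add_neg_cancel, hg.map_zero, hg.map_neg] at h
  linarith

theorem convexOn (hg : IsNormFunction g) : ConvexOn ℝ Set.univ g := by
  refine ⟨convex_univ, fun x _ y _ a b ha hb _ => ?_⟩
  calc g (a • x + b • y) ≤ g (a • x) + g (b • y) := hg.add_le _ _
    _ = a • g x + b • g y := by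
      rw [hg.map_smul, hg.map_smul, abs_of_nonneg ha, abs_of_nonneg hb, smul_eq_mul, smul_eq_mul]

theorem lpProdNorm {gE : E → ℝ} {gF : F → ℝ} (hE : IsNormFunction gE) (hF : IsNormFunction gF)
    {p : ℝ} (hp : 1 ≤ p) : IsNormFunction (lpProdNorm p gE gF) := by
  have hp0 : p ≠ 0 := by positivity
  have hsum : ∀ z : E × F, 0 ≤ gE z.1 ^ p + gF z.2 ^ p := fun z =>
    add_nonneg (Real.rpow_nonneg (hE.nonneg _) _) (Real.rpow_nonneg (hF.nonneg _) _)
  refine ⟨fun z => ?_, fun a z => ?_, fun z w => ?_⟩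
  · rw [_root_.lpProdNorm, Real.rpow_eq_zero (hsum z) (one_div_ne_zero hp0),
      add_eq_zero_iff_of_nonneg (Real.rpow_nonneg (hE.nonneg _) _)
        (Real.rpow_nonneg (hF.nonneg _) _),
      Real.rpow_eq_zero (hE.nonneg _) hp0, Real.rpow_eq_zero (hF.nonneg _) hp0,
      hE.eq_zero_iff, hF.eq_zero_iff, Prod.ext_iff]
    rfl
  · simp only [_root_.lpProdNorm, Prod.smul_fst, Prod.smul_snd, hE.map_smul, hF.map_smul]
    rw [Real.mul_rpow (abs_nonneg a) (hE.nonneg _), Real.mul_rpow (abs_nonneg a) (hF.nonneg _),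
      ← mul_add, Real.mul_rpow (by positivity) (hsum z), ← Real.rpow_mul (abs_nonneg a),
      mul_one_div_cancel hp0, Real.rpow_one]
  · have hmink := Real.Lp_add_le_of_nonneg (s := Finset.univ) (f := ![gE z.1, gF z.2])
      (g := ![gE w.1, gF w.2]) hp (by simp [Fin.forall_fin_two, hE.nonneg, hF.nonneg])
      (by simp [Fin.forall_fin_two, hE.nonneg, hF.nonneg])
    simp only [Fin.sum_univ_two, Matrix.cons_val_zero, Matrix.cons_val_one] at hmink
    calc _root_.lpProdNorm p gE gF (z + w)
        ≤ ((gE z.1 + gE w.1) ^ p + (gF z.2 + gF w.2) ^ p) ^ (1 / p) := by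
          unfold _root_.lpProdNorm
          gcongr
          · exact hsum _
          · exact hE.nonneg _
          · exact hE.add_le z.1 w.1
          · exact hF.nonneg _
          · exact hF.add_le z.2 w.2
      _ ≤ _ := hmink

end Algebraic

section Measure

variable {E : Type*} [NormedAddCommGroup E] [NormedSpace ℝ E] [FiniteDimensional ℝ E] {g : E → ℝ}

theorem continuous (hg : IsNormFunction g) : Continuous g :=
  continuousOn_univ.1 (hg.convexOn.continuousOn isOpen_univ)

variable [MeasurableSpace E] (μ : Measure E) [μ.IsAddHaarMeasure] {p : ℝ}

theorem measure_lt_one_pos (hg : IsNormFunction g) : 0 < μ {x | g x < 1} :=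
  (isOpen_lt hg.continuous continuous_const).measure_pos μ ⟨0, by simp [hg.map_zero]⟩

variable [BorelSpace E]

theorem measure_lt_one_eq (hg : IsNormFunction g) (hp : 0 < p) :
    μ {x | g x < 1} =
      .ofReal ((∫ x, Real.exp (-g x ^ p) ∂μ) / Real.Gamma (finrank ℝ E / p + 1)) :=
  measure_lt_one_eq_integral_div_gamma μ hg.map_zero hg.map_neg hg.add_le
    (fun h => (hg.eq_zero_iff _).1 h) (fun r x => (hg.map_smul r x).le) hp

theorem integral_exp_neg_rpow_pos (hg : IsNormFunction g) (hp : 0 < p) :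
    0 < ∫ x, Real.exp (-g x ^ p) ∂μ := by
  have hpos := hg.measure_lt_one_pos μ
  rw [hg.measure_lt_one_eq μ hp, ENNReal.ofReal_pos] at hpos
  exact (div_pos_iff_of_pos_right (by positivity)).1 hpos

theorem measureReal_le_one_eq [Nontrivial E] (hg : IsNormFunction g) (hp : 0 < p) :
    μ.real {x | g x ≤ 1} = (∫ x, Real.exp (-g x ^ p) ∂μ) / Real.Gamma (finrank ℝ E / p + 1) := by
  rw [measureReal_def, measure_le_eq_lt μ hg.map_zero hg.map_neg hg.add_le
    (fun h => (hg.eq_zero_iff _).1 h) (fun r x => (hg.map_smul r x).le), hg.measure_lt_one_eq μ hp,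
    ENNReal.toReal_ofReal]
  exact div_nonneg (hg.integral_exp_neg_rpow_pos μ hp).le (by positivity)

end Measure

end IsNormFunction

theorem integral_exp_neg_lpProdNorm_rpow {E F : Type*} [MeasurableSpace E] [MeasurableSpace F]
    (μ : Measure E) (ν : Measure F) [SFinite μ] [SFinite ν] {gE : E → ℝ} {gF : F → ℝ}
    (hE : ∀ x, 0 ≤ gE x) (hF : ∀ y, 0 ≤ gF y) {p : ℝ} (hp : p ≠ 0) :
    ∫ z, Real.exp (-lpProdNorm p gE gF z ^ p) ∂μ.prod ν =
      (∫ x, Real.exp (-gE x ^ p) ∂μ) * ∫ y, Real.exp (-gF y ^ p) ∂ν := by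
  have hpow : ∀ z : E × F, lpProdNorm p gE gF z ^ p = gE z.1 ^ p + gF z.2 ^ p := fun z => by
    rw [lpProdNorm, one_div,
      Real.rpow_inv_rpow (add_nonneg (Real.rpow_nonneg (hE _) _) (Real.rpow_nonneg (hF _) _)) hp]
  simp_rw [hpow, neg_add, Real.exp_add]
  exact integral_prod_mul (fun x => Real.exp (-gE x ^ p)) (fun y => Real.exp (-gF y ^ p))

/-- **Exact volume ratio for `ℓᵖ` direct sums.** For norms `NE` on `ℝⁿ`, `NF` on `ℝᵐ` and
`p ≥ 1`, the volume of the unit ball of the norm `(x, y) ↦ (NE x ^ p + NF y ^ p)^(1/p)`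
on `ℝⁿ × ℝᵐ` equals `Γ(1 + n/p) Γ(1 + m/p) / Γ(1 + (n+m)/p)` times the product of the
volumes of the unit balls of `NE` and `NF`. -/
theorem volume_ratio_lp_direct_sum (n m : ℕ) (hn : 1 ≤ n) (hm : 1 ≤ m)
    (NE : (Fin n → ℝ) → ℝ)
    (hNE0 : ∀ x, NE x = 0 ↔ x = 0)
    (hNEs : ∀ (a : ℝ) (x), NE (a • x) = |a| * NE x)
    (hNEt : ∀ x y, NE (x + y) ≤ NE x + NE y)
    (NF : (Fin m → ℝ) → ℝ)
    (hNF0 : ∀ y, NF y = 0 ↔ y = 0)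
    (hNFs : ∀ (a : ℝ) (y), NF (a • y) = |a| * NF y)
    (hNFt : ∀ y z, NF (y + z) ≤ NF y + NF z)
    (p : ℝ) (hp : 1 ≤ p) :
    (volume {z : (Fin n → ℝ) × (Fin m → ℝ) |
          (NE z.1 ^ p + NF z.2 ^ p) ^ (1 / p) ≤ 1}).toReal /
        ((volume {x : Fin n → ℝ | NE x ≤ 1}).toReal *
          (volume {y : Fin m → ℝ | NF y ≤ 1}).toReal) =
      Real.Gamma (1 + n / p) * Real.Gamma (1 + m / p) /
        Real.Gamma (1 + (n + m) / p) := by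
  have hE : IsNormFunction NE := ⟨hNE0, hNEs, hNEt⟩
  have hF : IsNormFunction NF := ⟨hNF0, hNFs, hNFt⟩
  have hp0 : 0 < p := by linarith
  have : Nonempty (Fin n) := ⟨⟨0, hn⟩⟩
  have : Nonempty (Fin m) := ⟨⟨0, hm⟩⟩
  have := Measure.prod.instIsAddHaarMeasure (volume : Measure (Fin n → ℝ))
    (volume : Measure (Fin m → ℝ))
  change (volume.prod volume).real {z | lpProdNorm p NE NF z ≤ 1} /
    (volume.real {x | NE x ≤ 1} * volume.real {y | NF y ≤ 1}) = _
  rw [(hE.lpProdNorm hF hp).measureReal_le_one_eq _ hp0, hE.measureReal_le_one_eq _ hp0,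
    hF.measureReal_le_one_eq _ hp0, integral_exp_neg_lpProdNorm_rpow _ _ hE.nonneg hF.nonneg hp0.ne',
    finrank_prod, finrank_fin_fun, finrank_fin_fun]
  have := hE.integral_exp_neg_rpow_pos volume hp0
  have := hF.integral_exp_neg_rpow_pos volume hp0
  push_cast
  rw [add_comm 1, add_comm 1, add_comm 1]
  field_simp
end

section
/- For all integers n, m ≥ 1, one has Γ(1 + (n+m)/2) ≤ binom(n+m, n) · Γ(1 + n/2) · Γ(1 + m/2). -/
/-!
Since `log ∘ Γ` is convex on `(0, ∞)`, the ratio `Γ(a + d) / Γ(a)` is nondecreasing in `a` for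
every `d ≥ 0`. Applied twice, this gives
`Γ(1 + (n+m)/2) / Γ(1 + n/2) ≤ Γ(1 + n + m/2) / Γ(1 + n)` and
`Γ(1 + n + m/2) / Γ(1 + m/2) ≤ Γ(1 + n + m) / Γ(1 + m)`; multiplying them and evaluating `Γ` at
integers as factorials leaves exactly the binomial coefficient.
-/

open Real Set

theorem ConvexOn.map_add_add_map_le {𝕜 β : Type*} [Field 𝕜] [LinearOrder 𝕜] [IsStrictOrderedRing 𝕜]
    [AddCommMonoid β] [PartialOrder β] [IsOrderedAddMonoid β] [Module 𝕜 β]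
    {s : Set 𝕜} {f : 𝕜 → β} (hf : ConvexOn 𝕜 s f) {a b d : 𝕜} (ha : a ∈ s) (hbd : b + d ∈ s)
    (hab : a ≤ b) (hd : 0 ≤ d) :
    f (a + d) + f b ≤ f (b + d) + f a := by
  rcases (add_nonneg (sub_nonneg.2 hab) hd).eq_or_lt with h | h
  · obtain ⟨rfl, rfl⟩ : b = a ∧ d = 0 := by constructor <;> linarith
    simp
  -- `a + d` and `b` sit symmetrically in `[a, b + d]`: their weights `t` and `1 - t` are swapped
  set t := d / (b - a + d)
  have ht0 : 0 ≤ t := div_nonneg hd h.le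
  have ht1 : 0 ≤ 1 - t := by rw [sub_nonneg, div_le_one h]; linarith
  have h₁ := hf.2 ha hbd ht1 ht0 (sub_add_cancel 1 t)
  have h₂ := hf.2 ha hbd ht0 ht1 (add_sub_cancel t 1)
  rw [show (1 - t) • a + t • (b + d) = a + d by simp only [t, smul_eq_mul]; field_simp; ring] at h₁
  rw [show t • a + (1 - t) • (b + d) = b by simp only [t, smul_eq_mul]; field_simp; ring] at h₂
  calc f (a + d) + f b ≤ ((1 - t) • f a + t • f (b + d)) + (t • f a + (1 - t) • f (b + d)) :=
        add_le_add h₁ h₂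
    _ = f (b + d) + f a := by
        rw [add_add_add_comm, ← add_smul, add_comm (t • f (b + d)), ← add_smul, sub_add_cancel,
          one_smul, one_smul, add_comm]

theorem Real.Gamma_add_mul_Gamma_le {a b d : ℝ} (ha : 0 < a) (hab : a ≤ b) (hd : 0 ≤ d) :
    Gamma (a + d) * Gamma b ≤ Gamma (b + d) * Gamma a := by
  have hpos : ∀ {x : ℝ}, a ≤ x → 0 < Gamma x := fun hx => Gamma_pos_of_pos (ha.trans_le hx)
  have h₁ := hpos (by linarith : a ≤ a + d)
  have h₂ := hpos hab
  have h₃ := hpos (by linarith : a ≤ b + d)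
  have h₄ := hpos le_rfl
  have hlog := convexOn_log_Gamma.map_add_add_map_le (mem_Ioi.2 ha)
    (mem_Ioi.2 (by linarith : 0 < b + d)) hab hd
  simp only [Function.comp_apply] at hlog
  rwa [← log_mul h₁.ne' h₂.ne', ← log_mul h₃.ne' h₄.ne', log_le_log_iff (by positivity)
    (by positivity)] at hlog

theorem Real.Gamma_one_add_add_div_two_mul_le (x y : ℝ) (hx : 0 ≤ x) (hy : 0 ≤ y) :
    Gamma (1 + (x + y) / 2) * Gamma (1 + x) * Gamma (1 + y) ≤
      Gamma (1 + x + y) * Gamma (1 + x / 2) * Gamma (1 + y / 2) := by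
  have h₁ := Gamma_add_mul_Gamma_le (a := 1 + x / 2) (b := 1 + x) (d := y / 2)
    (by positivity) (by linarith) (by positivity)
  have h₂ := Gamma_add_mul_Gamma_le (a := 1 + y / 2) (b := 1 + y) (d := x)
    (by positivity) (by linarith) hx
  calc Gamma (1 + (x + y) / 2) * Gamma (1 + x) * Gamma (1 + y)
      = Gamma (1 + x / 2 + y / 2) * Gamma (1 + x) * Gamma (1 + y) := by ring_nf
    _ ≤ Gamma (1 + x + y / 2) * Gamma (1 + x / 2) * Gamma (1 + y) :=
        mul_le_mul_of_nonneg_right h₁ (Gamma_nonneg_of_nonneg (by positivity))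
    _ = Gamma (1 + y / 2 + x) * Gamma (1 + y) * Gamma (1 + x / 2) := by ring_nf
    _ ≤ Gamma (1 + y + x) * Gamma (1 + y / 2) * Gamma (1 + x / 2) :=
        mul_le_mul_of_nonneg_right h₂ (Gamma_nonneg_of_nonneg (by positivity))
    _ = Gamma (1 + x + y) * Gamma (1 + x / 2) * Gamma (1 + y / 2) := by ring_nf

theorem Gamma_add_half_le_choose_mul_general (n m : ℕ) :
    Real.Gamma (1 + ((n : ℝ) + (m : ℝ)) / 2) ≤
      (Nat.choose (n + m) n : ℝ) * Real.Gamma (1 + (n : ℝ) / 2) *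
        Real.Gamma (1 + (m : ℝ) / 2) := by
  have key := Real.Gamma_one_add_add_div_two_mul_le n m n.cast_nonneg m.cast_nonneg
  have hfact : ∀ k : ℕ, Gamma (1 + k) = k.factorial := fun k => by
    rw [add_comm, Gamma_nat_eq_factorial]
  have hsum : Gamma (1 + n + m) = ((n + m).choose n * n.factorial * m.factorial : ℕ) := by
    rw [Nat.choose_symm_add, Nat.add_choose_mul_factorial_mul_factorial, add_assoc, ← Nat.cast_add,
      hfact]
  rw [hfact, hfact, hsum] at key
  refine le_of_mul_le_mul_right (a := (n.factorial * m.factorial : ℝ)) ?_ (by positivity)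
  push_cast at key
  linarith

/-- For all integers `n, m ≥ 1`:
`Γ(1 + (n+m)/2) ≤ binom (n+m) n * Γ(1 + n/2) * Γ(1 + m/2)`. -/
theorem Gamma_add_half_le_choose_mul (n m : ℕ) (hn : 1 ≤ n) (hm : 1 ≤ m) :
    Real.Gamma (1 + ((n : ℝ) + (m : ℝ)) / 2) ≤
      (Nat.choose (n + m) n : ℝ) * Real.Gamma (1 + (n : ℝ) / 2) *
        Real.Gamma (1 + (m : ℝ) / 2) :=
  Gamma_add_half_le_choose_mul_general n m
end

section
/- For all integers n, m ≥ 0, one has binom(2n + 2m, 2n) ≤ binom(n + m, n)³. -/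
/-!
Induct on `m`. Passing from `m` to `m + 1` multiplies the left side by
`(2N + 1)(2N + 2) / ((2m + 1)(2m + 2))` and the right side by `((N + 1) / (m + 1))³`,
where `N = n + m ≥ m`. The first factor is at most the second because
`t ↦ (2t + 1) / (t + 1)²` is decreasing on `ℕ`.
-/

namespace Nat

theorem two_mul_add_one_mul_succ_sq_le {x y : ℕ} (h : y ≤ x) :
    (2 * x + 1) * (y + 1) ^ 2 ≤ (2 * y + 1) * (x + 1) ^ 2 := by
  obtain ⟨d, rfl⟩ := Nat.exists_eq_add_of_le h
  calc (2 * (y + d) + 1) * (y + 1) ^ 2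
      ≤ (2 * (y + d) + 1) * (y + 1) ^ 2 + (2 * (y + 1) * d * y + d ^ 2 * (2 * y + 1)) :=
        Nat.le_add_right _ _
    _ = (2 * y + 1) * (y + d + 1) ^ 2 := by ring

theorem mul_succ_pow_three_le_succ_pow_three_mul {x y : ℕ} (h : y ≤ x) :
    (2 * x + 1) * (2 * x + 2) * (y + 1) ^ 3 ≤ (x + 1) ^ 3 * ((2 * y + 1) * (2 * y + 2)) :=
  calc (2 * x + 1) * (2 * x + 2) * (y + 1) ^ 3
      = 2 * (x + 1) * (y + 1) * ((2 * x + 1) * (y + 1) ^ 2) := by ring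
    _ ≤ 2 * (x + 1) * (y + 1) * ((2 * y + 1) * (x + 1) ^ 2) :=
        Nat.mul_le_mul_left _ (two_mul_add_one_mul_succ_sq_le h)
    _ = (x + 1) ^ 3 * ((2 * y + 1) * (2 * y + 2)) := by ring

theorem add_succ_choose_mul (k j : ℕ) :
    (k + j + 1).choose k * (j + 1) = (k + j).choose k * (k + j + 1) := by
  rw [choose_mul_succ_eq, show k + j + 1 - k = j + 1 by omega]

theorem add_two_choose_mul (k j : ℕ) :
    (k + j + 2).choose k * ((j + 1) * (j + 2)) =
      (k + j).choose k * ((k + j + 1) * (k + j + 2)) := by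
  calc (k + j + 2).choose k * ((j + 1) * (j + 2))
      = (k + (j + 1) + 1).choose k * (j + 1 + 1) * (j + 1) := by ring_nf
    _ = (k + j).choose k * ((k + j + 1) * (k + j + 2)) := by
        rw [add_succ_choose_mul, ← add_assoc, mul_right_comm, add_succ_choose_mul]; ring

end Nat

/-- For all integers `n, m ≥ 0`: `binom (2n + 2m) (2n) ≤ binom (n + m) n ^ 3`. -/
theorem choose_two_mul_le_choose_cube (n m : ℕ) :
    Nat.choose (2 * n + 2 * m) (2 * n) ≤ Nat.choose (n + m) n ^ 3 := by
  induction m with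
  | zero => simp
  | succ m ih =>
    have hlhs := Nat.add_two_choose_mul (2 * n) (2 * m)
    have hrhs := Nat.add_succ_choose_mul n m
    have hratio := Nat.mul_succ_pow_three_le_succ_pow_three_mul (Nat.le_add_left m n)
    refine Nat.le_of_mul_le_mul_right (c := (2 * m + 1) * (2 * m + 2) * (m + 1) ^ 3) ?_
      (by positivity)
    calc (2 * n + 2 * (m + 1)).choose (2 * n) * ((2 * m + 1) * (2 * m + 2) * (m + 1) ^ 3)
        = (2 * n + 2 * m).choose (2 * n) *
            ((2 * (n + m) + 1) * (2 * (n + m) + 2) * (m + 1) ^ 3) := by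
          rw [show 2 * n + 2 * (m + 1) = 2 * n + 2 * m + 2 by ring, ← mul_assoc, hlhs]; ring
      _ ≤ (n + m).choose n ^ 3 * ((n + m + 1) ^ 3 * ((2 * m + 1) * (2 * m + 2))) :=
          Nat.mul_le_mul ih hratio
      _ = ((n + m).choose n * (n + m + 1)) ^ 3 * ((2 * m + 1) * (2 * m + 2)) := by ring
      _ = (n + (m + 1)).choose n ^ 3 * ((2 * m + 1) * (2 * m + 2) * (m + 1) ^ 3) := by
          rw [← hrhs, ← add_assoc]; ring
end

section
/- (Frobenius norm of the inverse) Let n ≥ 1 and let A be an invertible n × n complex matrix. Then the Frobenius (Hilbert–Schmidt) norms satisfy ‖A⁻¹‖_F ≤ ‖A‖_F^{n−1} / |det A|. -/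
/-!
For `B = A * Aᴴ`, positive definite with eigenvalues `μ`, one has `‖A‖_F² = tr B = ∑ μᵢ`,
`‖A⁻¹‖_F² = tr B⁻¹ = ∑ μᵢ⁻¹` and `|det A|² = det B = ∏ μᵢ`. Multiplying through by `∏ μᵢ`,
the squared inequality becomes `∑ᵢ ∏_{k ≠ i} μₖ ≤ (∑ μᵢ)ⁿ⁻¹`, which holds for any nonnegative
elements of an ordered semiring by induction on their number.
-/

open Finset Matrix
open scoped ComplexOrder

theorem Finset.sum_prod_erase_le_sum_pow {ι R : Type*} [DecidableEq ι] [CommSemiring R]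
    [PartialOrder R] [IsOrderedRing R] (s : Finset ι) {f : ι → R}
    (hf : ∀ i ∈ s, 0 ≤ f i) :
    ∑ i ∈ s, ∏ k ∈ s.erase i, f k ≤ (∑ i ∈ s, f i) ^ (#s - 1) := by
  induction s using Finset.induction_on with
  | empty => simp
  | insert a s ha ih =>
    rcases s.eq_empty_or_nonempty with rfl | hs
    · simp
    have hf' : ∀ i ∈ s, 0 ≤ f i := fun i hi => hf i (mem_insert_of_mem hi)
    have hfa : 0 ≤ f a := hf a (mem_insert_self a s)
    set S := ∑ i ∈ s, f i
    have hS : 0 ≤ S := sum_nonneg hf'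
    obtain ⟨m, hm⟩ : ∃ m, #s = m + 1 := Nat.exists_eq_add_one.mpr hs.card_pos
    have hsplit : ∑ i ∈ insert a s, ∏ k ∈ (insert a s).erase i, f k
        = ∏ k ∈ s, f k + f a * ∑ i ∈ s, ∏ k ∈ s.erase i, f k := by
      rw [sum_insert ha, erase_insert ha, mul_sum]
      congr 1
      refine sum_congr rfl fun i hi => ?_
      rw [erase_insert_of_ne (ne_of_mem_of_not_mem hi ha).symm, prod_insert (by simp [ha])]
    have hprod : ∏ k ∈ s, f k ≤ S ^ (m + 1) := by
      rw [← hm, ← prod_const]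
      exact prod_le_prod hf' fun k hk => single_le_sum hf' hk
    calc ∑ i ∈ insert a s, ∏ k ∈ (insert a s).erase i, f k
        ≤ S ^ (m + 1) + f a * S ^ m := by
          rw [hsplit]
          gcongr
          simpa [hm] using ih hf'
      _ = (S + f a) * S ^ m := by ring
      _ ≤ (S + f a) * (S + f a) ^ m := by gcongr; exact le_add_of_nonneg_right hfa
      _ = (∑ i ∈ insert a s, f i) ^ (#(insert a s) - 1) := by
          rw [sum_insert ha, card_insert_of_notMem ha, hm, Nat.add_sub_cancel, add_comm (f a),
            pow_succ']

theorem Finset.sum_inv_le_sum_pow_div_prod {ι K : Type*} [DecidableEq ι] [Semifield K]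
    [LinearOrder K] [IsStrictOrderedRing K] (s : Finset ι) {f : ι → K}
    (hf : ∀ i ∈ s, 0 < f i) :
    ∑ i ∈ s, (f i)⁻¹ ≤ (∑ i ∈ s, f i) ^ (#s - 1) / ∏ i ∈ s, f i := by
  rw [le_div_iff₀ (prod_pos hf), sum_mul]
  calc ∑ i ∈ s, (f i)⁻¹ * ∏ k ∈ s, f k = ∑ i ∈ s, ∏ k ∈ s.erase i, f k :=
        sum_congr rfl fun i hi => by
          rw [← mul_prod_erase s f hi, inv_mul_cancel_left₀ (hf i hi).ne']
    _ ≤ (∑ i ∈ s, f i) ^ (#s - 1) := sum_prod_erase_le_sum_pow s fun i hi => (hf i hi).le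

namespace Matrix

variable {ι 𝕜 : Type*} [Fintype ι] [DecidableEq ι] [RCLike 𝕜]

theorem trace_mul_conjTranspose_self_eq_sum_norm_sq {m n : Type*} [Fintype m] [Fintype n]
    (A : Matrix m n 𝕜) :
    (A * Aᴴ).trace = ((∑ i, ∑ j, ‖A i j‖ ^ 2 : ℝ) : 𝕜) := by
  simp [trace, mul_apply, RCLike.mul_conj]

theorem IsHermitian.trace_cfc_eq_sum {A : Matrix ι ι 𝕜} (hA : A.IsHermitian) (f : ℝ → ℝ) :
    (cfc f A).trace = ∑ i, (f (hA.eigenvalues i) : 𝕜) := by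
  rw [hA.cfc_eq, IsHermitian.cfc, Unitary.conjStarAlgAut_apply, trace_mul_cycle,
    UnitaryGroup.star_mul_self, one_mul, trace_diagonal]
  rfl

theorem IsHermitian.trace_inv_eq_sum_inv_eigenvalues {A : Matrix ι ι 𝕜} (hA : A.IsHermitian)
    (h : IsUnit A) :
    A⁻¹.trace = ∑ i, ((hA.eigenvalues i)⁻¹ : 𝕜) := by
  rw [nonsing_inv_eq_ringInverse, ← cfc_ringInverse_id (R := ℝ) A h hA.isSelfAdjoint,
    hA.trace_cfc_eq_sum]
  simp

theorem sum_norm_sq_inv_le (A : Matrix ι ι 𝕜) (hA : IsUnit A.det) :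
    ∑ i, ∑ j, ‖A⁻¹ i j‖ ^ 2 ≤
      (∑ i, ∑ j, ‖A i j‖ ^ 2) ^ (Fintype.card ι - 1) / ‖A.det‖ ^ 2 := by
  have hB : (A * Aᴴ).PosDef :=
    .mul_conjTranspose_self A (vecMul_injective_of_isUnit ((isUnit_iff_isUnit_det A).mpr hA))
  set μ := hB.isHermitian.eigenvalues
  have htrace : ∑ i, ∑ j, ‖A i j‖ ^ 2 = ∑ i, μ i := by
    have := hB.isHermitian.trace_eq_sum_eigenvalues
    rw [trace_mul_conjTranspose_self_eq_sum_norm_sq] at this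
    exact_mod_cast this
  have htrace_inv : ∑ i, ∑ j, ‖A⁻¹ i j‖ ^ 2 = ∑ i, (μ i)⁻¹ := by
    have := hB.isHermitian.trace_inv_eq_sum_inv_eigenvalues hB.isUnit
    rw [mul_inv_rev, ← conjTranspose_nonsing_inv, trace_mul_comm,
      trace_mul_conjTranspose_self_eq_sum_norm_sq] at this
    exact_mod_cast this
  have hdet : ‖A.det‖ ^ 2 = ∏ i, μ i := by
    have := hB.isHermitian.det_eq_prod_eigenvalues
    rw [det_mul, det_conjTranspose, RCLike.star_def, RCLike.mul_conj] at this
    exact_mod_cast this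
  rw [htrace, htrace_inv, hdet, ← card_univ]
  exact sum_inv_le_sum_pow_div_prod univ fun i _ => hB.eigenvalues_pos i

end Matrix

theorem frobenius_norm_inverse_le_general (n : ℕ)
    (A : Matrix (Fin n) (Fin n) ℂ) (hA : IsUnit A.det) :
    Real.sqrt (∑ i, ∑ j, ‖A⁻¹ i j‖ ^ 2) ≤
      Real.sqrt (∑ i, ∑ j, ‖A i j‖ ^ 2) ^ (n - 1) /
        ‖A.det‖ := by
  have h := A.sum_norm_sq_inv_le hA
  rw [Fintype.card_fin] at h
  calc Real.sqrt (∑ i, ∑ j, ‖A⁻¹ i j‖ ^ 2)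
      ≤ Real.sqrt ((∑ i, ∑ j, ‖A i j‖ ^ 2) ^ (n - 1) / ‖A.det‖ ^ 2) := Real.sqrt_le_sqrt h
    _ = Real.sqrt (∑ i, ∑ j, ‖A i j‖ ^ 2) ^ (n - 1) / ‖A.det‖ := by
      rw [Real.sqrt_div' _ (by positivity), Real.sqrt_sq (norm_nonneg _)]
      congr 1
      rw [Real.sqrt_eq_iff_eq_sq (by positivity) (by positivity), ← pow_mul, mul_comm, pow_mul,
        Real.sq_sqrt (by positivity)]

/-- **Frobenius norm of the inverse.** If `A` is an invertible `n × n` complex matrix,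
then `‖A⁻¹‖_F ≤ ‖A‖_F^(n-1) / |det A|`. -/
theorem frobenius_norm_inverse_le (n : ℕ) (hn : 1 ≤ n)
    (A : Matrix (Fin n) (Fin n) ℂ) (hA : IsUnit A.det) :
    Real.sqrt (∑ i, ∑ j, ‖A⁻¹ i j‖ ^ 2) ≤
      Real.sqrt (∑ i, ∑ j, ‖A i j‖ ^ 2) ^ (n - 1) /
        ‖A.det‖ :=
  frobenius_norm_inverse_le_general n A hA
end

section
/- For every integer n ≥ 2, one has ∫₀¹ (1−u)^{n−2} · (−u · log u) du = (Hₙ − 1) / (n(n−1)), where Hₙ = ∑_{i=1}^{n} 1/i is the n-th harmonic number. -/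
/-!
Since `u (1 - u)^m = (1 - u)^m - (1 - u)^(m+1)`, the integral is `J m - J (m + 1)` where
`J k = ∫₀¹ (1 - u)^k (-log u) du = H_{k+1} / (k + 1)`. The latter is integration by parts
against the primitive `(1 - (1 - u)^(k+1)) / (k + 1)` of `(1 - u)^k`, chosen to vanish at `0`;
dividing it by `u` leaves the geometric sum `∑_{j ≤ k} (1 - u)^j`, whose integral is `H_{k+1}`.
-/

open Real Finset intervalIntegral

/-- The first term is `(∑_{j ≤ k} (1 - u)^j) · (-u log u) / (k + 1)`, so the primitive is
continuous at `0` despite the logarithm. -/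
noncomputable def oneSubPowMulNegLogPrimitive (k : ℕ) (u : ℝ) : ℝ :=
  ((1 - (1 - u) ^ (k + 1)) * -log u - ∑ j ∈ range (k + 1), (1 - u) ^ (j + 1) / (j + 1)) / (k + 1)

theorem hasDerivAt_oneSubPowMulNegLogPrimitive (k : ℕ) {x : ℝ} (hx : x ≠ 0) :
    HasDerivAt (oneSubPowMulNegLogPrimitive k) ((1 - x) ^ k * -log x) x := by
  have hpow (j : ℕ) :
      HasDerivAt (fun u : ℝ => (1 - u) ^ (j + 1)) (-((j + 1) * (1 - x) ^ j)) x := by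
    refine ((hasDerivAt_id' x).const_sub 1).fun_pow (j + 1) |>.congr_deriv ?_
    push_cast
    ring
  have hsum : HasDerivAt (fun u => ∑ j ∈ range (k + 1), (1 - u) ^ (j + 1) / ((j : ℝ) + 1))
      (-∑ j ∈ range (k + 1), (1 - x) ^ j) x := by
    rw [← sum_neg_distrib]
    refine HasDerivAt.fun_sum fun j _ => (hpow j).div_const _ |>.congr_deriv ?_
    field_simp
  have hgeom : x * ∑ j ∈ range (k + 1), (1 - x) ^ j = 1 - (1 - x) ^ (k + 1) := by
    rw [← mul_neg_geom_sum, sub_sub_cancel]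
  refine ((((hpow k).const_sub 1).mul (hasDerivAt_log hx).fun_neg).sub hsum).div_const
    ((k : ℝ) + 1) |>.congr_deriv ?_
  field_simp
  linear_combination hgeom

theorem continuous_oneSubPowMulNegLogPrimitive (k : ℕ) :
    Continuous (oneSubPowMulNegLogPrimitive k) := by
  have : oneSubPowMulNegLogPrimitive k = fun u =>
      ((∑ j ∈ range (k + 1), (1 - u) ^ j) * -(u * log u) -
        ∑ j ∈ range (k + 1), (1 - u) ^ (j + 1) / (j + 1)) / (k + 1) := by
    funext u
    rw [oneSubPowMulNegLogPrimitive, ← mul_neg_geom_sum, sub_sub_cancel]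
    ring
  rw [this]
  fun_prop

theorem intervalIntegrable_one_sub_pow_mul_neg_log (k : ℕ) (a b : ℝ) :
    IntervalIntegrable (fun u : ℝ => (1 - u) ^ k * -log u) MeasureTheory.volume a b :=
  intervalIntegrable_log'.neg.continuousOn_mul (by fun_prop)

theorem integral_one_sub_pow_mul_neg_log (k : ℕ) :
    ∫ u in (0 : ℝ)..1, (1 - u) ^ k * -log u =
      (∑ j ∈ range (k + 1), (1 : ℝ) / (j + 1)) / (k + 1) := by
  rw [integral_eq_sub_of_hasDeriv_right_of_le zero_le_one
    (continuous_oneSubPowMulNegLogPrimitive k).continuousOn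
    (fun x hx => (hasDerivAt_oneSubPowMulNegLogPrimitive k hx.1.ne').hasDerivWithinAt)
    (intervalIntegrable_one_sub_pow_mul_neg_log k 0 1)]
  simp [oneSubPowMulNegLogPrimitive, neg_div]

/-- For every integer `n ≥ 2`:
`∫₀¹ (1-u)^(n-2) * (-u log u) du = (Hₙ - 1) / (n (n-1))`. -/
theorem integral_one_sub_pow_mul_neg_mul_log (n : ℕ) (hn : 2 ≤ n) :
    ∫ u in (0 : ℝ)..1, (1 - u) ^ (n - 2) * (-(u * Real.log u)) =
      ((∑ i ∈ Finset.range n, (1 : ℝ) / (i + 1)) - 1) /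
        ((n : ℝ) * ((n : ℝ) - 1)) := by
  obtain ⟨m, rfl⟩ : ∃ m, n = m + 2 := ⟨n - 2, by omega⟩
  have hsplit (u : ℝ) : (1 - u) ^ (m + 2 - 2) * (-(u * log u)) =
      (1 - u) ^ m * -log u - (1 - u) ^ (m + 1) * -log u := by
    rw [Nat.add_sub_cancel]
    ring
  simp_rw [hsplit, integral_sub (intervalIntegrable_one_sub_pow_mul_neg_log m 0 1)
    (intervalIntegrable_one_sub_pow_mul_neg_log (m + 1) 0 1), integral_one_sub_pow_mul_neg_log,
    sum_range_succ _ (m + 1)]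
  push_cast
  rw [show (m : ℝ) + 2 - 1 = m + 1 by ring]
  field_simp
  ring
end
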